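/- arXiv:1612.06143 — 7 statements merged into one kernel-verified Lean document; each statement's English description precedes it below -/
import Mathlib

section
/- Let Φ be a crystallographic root system and β₁, β₂, β₃ ∈ Φ be roots such that β₁ + β₂ + β₃ ∈ Φ and βᵢ ≠ -βⱼ for all i, j ∈ {1,2,3}. Then at least two of the three sums βᵢ + βⱼ (with i ≠ j) belong to Φ. -/
local notation "⟪" x ", " y "⟫" => @inner ℝ _ _ x y

/-- A finite (crystallographic) root system in a real inner product space. -/
structure CrystRS (E : Type) [NormedAddCommGroup E] [InnerProductSpace ℝ E] where
  roots : Set E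
  finite : roots.Finite
  nonzero : ∀ β ∈ roots, β ≠ (0 : E)
  neg_mem : ∀ β ∈ roots, -β ∈ roots
  cartan : ∀ β ∈ roots, ∀ γ ∈ roots, ∃ n : ℤ, 2 * ⟪β, γ⟫ = (n : ℝ) * ⟪γ, γ⟫
  reflect : ∀ β ∈ roots, ∀ γ ∈ roots, β - (2 * ⟪β, γ⟫ / ⟪γ, γ⟫) • γ ∈ roots

namespace CrystRS

variable {E : Type} [NormedAddCommGroup E] [InnerProductSpace ℝ E]

/-- Irreducibility: the set of roots admits no nontrivial orthogonal decomposition. -/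
def Irred (R : CrystRS E) : Prop :=
  ∀ A B : Set E, R.roots = A ∪ B → (∀ a ∈ A, ∀ b ∈ B, ⟪a, b⟫ = 0) → A = ∅ ∨ B = ∅

end CrystRS

/-- A root system equipped with a system of simple roots (hence a positive system). -/
structure BasedRS (E : Type) [NormedAddCommGroup E] [InnerProductSpace ℝ E]
    extends CrystRS E where
  simple : Finset E
  simple_sub : (simple : Set E) ⊆ roots
  simple_indep : LinearIndependent ℝ (fun α : {x // x ∈ simple} => (α : E))
  decomp : ∀ β ∈ roots,
    β ∈ AddSubmonoid.closure (simple : Set E) ∨ -β ∈ AddSubmonoid.closure (simple : Set E)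

/-- `γ - β` is a nonnegative integer combination of elements of `P`. -/
def leRel {E : Type} [NormedAddCommGroup E] [InnerProductSpace ℝ E]
    (P : Set E) (β γ : E) : Prop := γ - β ∈ AddSubmonoid.closure P

/-- The indecomposable elements of `P` (the simple roots of a positive system `P`). -/
def SimpleOf {E : Type} [NormedAddCommGroup E] [InnerProductSpace ℝ E]
    (P : Set E) : Set E := {β ∈ P | ∀ γ ∈ P, ∀ δ ∈ P, β ≠ γ + δ}

/-- `C` is an irreducible component of `Ψ`: nonempty, orthogonal to the rest of `Ψ`,
and admitting no further nontrivial orthogonal decomposition. -/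
def IsComponent {E : Type} [NormedAddCommGroup E] [InnerProductSpace ℝ E]
    (Ψ C : Set E) : Prop :=
  C ⊆ Ψ ∧ C.Nonempty ∧ (∀ a ∈ C, ∀ b ∈ Ψ \ C, ⟪a, b⟫ = 0) ∧
    ∀ A B : Set E, C = A ∪ B → (∀ a ∈ A, ∀ b ∈ B, ⟪a, b⟫ = 0) → A = ∅ ∨ B = ∅

namespace BasedRS

variable {E : Type} [NormedAddCommGroup E] [InnerProductSpace ℝ E] (R : BasedRS E)

/-- The positive roots: roots that are nonnegative integer combinations of simple roots. -/
def pos : Set E := {β ∈ R.roots | β ∈ AddSubmonoid.closure (R.simple : Set E)}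

/-- The standard partial order: `γ - β` is a nonnegative integer combination of
simple roots. -/
def le (β γ : E) : Prop := γ - β ∈ AddSubmonoid.closure (R.simple : Set E)

def lt (β γ : E) : Prop := R.le β γ ∧ β ≠ γ

/-- An abelian ideal of the positive system: upward closed, and no two of its
elements sum to a root. -/
def IsAbelianIdeal (I : Set E) : Prop :=
  I ⊆ R.pos ∧ (∀ β ∈ I, ∀ γ ∈ R.pos, R.le β γ → γ ∈ I) ∧
    ∀ β ∈ I, ∀ γ ∈ I, β + γ ∉ R.roots

/-- A short root: of minimal length among the roots. -/
def IsShort (β : E) : Prop := β ∈ R.roots ∧ ∀ γ ∈ R.roots, ‖β‖ ≤ ‖γ‖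

/-- A long root: of maximal length among the roots. -/
def IsLong (β : E) : Prop := β ∈ R.roots ∧ ∀ γ ∈ R.roots, ‖γ‖ ≤ ‖β‖

/-- `θ` is the highest root. -/
def IsHighest (θ : E) : Prop := θ ∈ R.pos ∧ ∀ β ∈ R.roots, R.le β θ

/-- The coefficient of the simple root `α` in `β` equals `1`. -/
def coeffOne (α β : E) : Prop :=
  β - α ∈ Submodule.span ℤ ((R.simple : Set E) \ {α})

end BasedRS

/-!
If neither `x + y` nor `x + z` is a root, then `⟪x, y⟫ ≥ 0` and `⟪x, z⟫ ≥ 0` (a negative inner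
product between non-opposite roots makes their sum a root). Writing `δ = x + y + z`, this gives
`⟪δ, y⟫ + ⟪δ, z⟫ = ⟪x, y⟫ + ⟪x, z⟫ + ‖y + z‖² > 0`, so `⟪δ, y⟫ > 0` or `⟪δ, z⟫ > 0`, and then
`δ - y = x + z` or `δ - z = x + y` is a root after all. Applying this to each of the three roots
in turn shows that at most one of the pairwise sums fails to be a root.
-/

namespace CrystRS

variable {E : Type} [NormedAddCommGroup E] [InnerProductSpace ℝ E] (R : CrystRS E)

lemma exists_int_pos_of_inner_pos {β γ : E} (hβ : β ∈ R.roots) (hγ : γ ∈ R.roots)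
    (hpos : 0 < ⟪β, γ⟫) : ∃ n : ℤ, 0 < n ∧ 2 * ⟪β, γ⟫ = n * ⟪γ, γ⟫ := by
  obtain ⟨n, hn⟩ := R.cartan β hβ γ hγ
  have hn0 : (0 : ℝ) < n := pos_of_mul_pos_left (by linarith) real_inner_self_nonneg
  exact ⟨n, by exact_mod_cast hn0, hn⟩

lemma sub_mem_of_two_inner_eq {β γ : E} (hβ : β ∈ R.roots) (hγ : γ ∈ R.roots)
    (h : 2 * ⟪β, γ⟫ = ⟪γ, γ⟫) : β - γ ∈ R.roots := by
  have := R.reflect β hβ γ hγ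
  rwa [h, div_self (inner_self_ne_zero.mpr (R.nonzero γ hγ)), one_smul] at this

lemma sub_mem_of_inner_pos {β γ : E} (hβ : β ∈ R.roots) (hγ : γ ∈ R.roots) (hne : β ≠ γ)
    (hpos : 0 < ⟪β, γ⟫) : β - γ ∈ R.roots := by
  obtain ⟨n, hn0, hn⟩ := R.exists_int_pos_of_inner_pos hβ hγ hpos
  obtain ⟨m, hm0, hm⟩ := R.exists_int_pos_of_inner_pos hγ hβ (real_inner_comm β γ ▸ hpos)
  rcases (by omega : n = 1 ∨ 2 ≤ n) with rfl | hn2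
  · exact R.sub_mem_of_two_inner_eq hβ hγ (by simpa using hn)
  rcases (by omega : m = 1 ∨ 2 ≤ m) with rfl | hm2
  · simpa using R.neg_mem _ (R.sub_mem_of_two_inner_eq hγ hβ (by simpa using hm))
  -- Both Cartan integers are at least `2`, which forces `‖β - γ‖² ≤ 0`.
  have hn2' : (2 : ℝ) ≤ n := by exact_mod_cast hn2
  have hm2' : (2 : ℝ) ≤ m := by exact_mod_cast hm2
  have hββ : 0 ≤ ⟪β, β⟫ := real_inner_self_nonneg
  have hγγ : 0 ≤ ⟪γ, γ⟫ := real_inner_self_nonneg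
  have hdiff : ⟪β - γ, β - γ⟫ ≤ 0 := by
    rw [real_inner_comm β γ] at hm
    rw [real_inner_sub_sub_self]
    nlinarith
  exact absurd (sub_eq_zero.mp (real_inner_self_nonpos.mp hdiff)) hne

lemma add_mem_of_inner_neg {β γ : E} (hβ : β ∈ R.roots) (hγ : γ ∈ R.roots) (hne : β ≠ -γ)
    (hneg : ⟪β, γ⟫ < 0) : β + γ ∈ R.roots := by
  simpa using R.sub_mem_of_inner_pos hβ (R.neg_mem γ hγ) hne (by simpa [inner_neg_right])

lemma add_mem_or_add_mem {x y z : E} (hx : x ∈ R.roots) (hy : y ∈ R.roots) (hz : z ∈ R.roots)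
    (hxyz : x + y + z ∈ R.roots) (hxy : x ≠ -y) (hxz : x ≠ -z) (hyz : y ≠ -z) :
    x + y ∈ R.roots ∨ x + z ∈ R.roots := by
  by_contra! ⟨hxy', hxz'⟩
  have hy0 : 0 ≤ ⟪x, y⟫ := not_lt.mp fun h => hxy' (R.add_mem_of_inner_neg hx hy hxy h)
  have hz0 : 0 ≤ ⟪x, z⟫ := not_lt.mp fun h => hxz' (R.add_mem_of_inner_neg hx hz hxz h)
  have hyz0 : 0 < ⟪y + z, y + z⟫ :=
    real_inner_self_pos.mpr fun h => hyz (eq_neg_of_add_eq_zero_left h)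
  have hδ : 0 < ⟪x + y + z, y⟫ ∨ 0 < ⟪x + y + z, z⟫ := by
    by_contra! ⟨hδy, hδz⟩
    have hexpand : ⟪x + y + z, y + z⟫ = ⟪x, y⟫ + ⟪x, z⟫ + ⟪y + z, y + z⟫ := by
      simp only [inner_add_left, inner_add_right]
      ring
    rw [inner_add_right] at hexpand
    linarith
  rcases hδ with hδy | hδz
  · have hne : x + y + z ≠ y := fun h => hxz (eq_neg_of_add_eq_zero_left (by
      rw [add_right_comm] at h; simpa using h))
    exact hxz' (by simpa [add_sub_right_comm] using R.sub_mem_of_inner_pos hxyz hy hne hδy)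
  · have hne : x + y + z ≠ z := fun h => hxy (eq_neg_of_add_eq_zero_left (by simpa using h))
    exact hxy' (by simpa using R.sub_mem_of_inner_pos hxyz hz hne hδz)

end CrystRS

theorem statement0 {E : Type} [NormedAddCommGroup E] [InnerProductSpace ℝ E] (R : CrystRS E) (β₁ β₂ β₃ : E)
    (h1 : β₁ ∈ R.roots) (h2 : β₂ ∈ R.roots) (h3 : β₃ ∈ R.roots)
    (hsum : β₁ + β₂ + β₃ ∈ R.roots)
    (h12 : β₁ ≠ -β₂) (h13 : β₁ ≠ -β₃) (h23 : β₂ ≠ -β₃) :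
    (β₁ + β₂ ∈ R.roots ∧ β₁ + β₃ ∈ R.roots) ∨
    (β₁ + β₂ ∈ R.roots ∧ β₂ + β₃ ∈ R.roots) ∨
    (β₁ + β₃ ∈ R.roots ∧ β₂ + β₃ ∈ R.roots) := by
  have h21 : β₂ ≠ -β₁ := fun h => h12 (neg_eq_iff_eq_neg.mp h.symm)
  have h31 : β₃ ≠ -β₁ := fun h => h13 (neg_eq_iff_eq_neg.mp h.symm)
  have h32 : β₃ ≠ -β₂ := fun h => h23 (neg_eq_iff_eq_neg.mp h.symm)
  have hA := R.add_mem_or_add_mem h1 h2 h3 hsum h12 h13 h23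
  have hB := R.add_mem_or_add_mem h2 h1 h3 (by rwa [add_comm β₂]) h21 h23 h13
  have hC := R.add_mem_or_add_mem h3 h1 h2 (by rwa [add_rotate]) h31 h32 h12
  rw [add_comm β₂ β₁] at hB
  rw [add_comm β₃ β₁, add_comm β₃ β₂] at hC
  tauto
end

section
/- Let I be an abelian ideal of a positive system Φ⁺ of a finite irreducible crystallographic root system Φ. If β, γ ∈ I and β - γ ∈ Φ, then (β, γ) > 0. -/
local notation "⟪" x ", " y "⟫" => @inner ℝ _ _ x y

/-!
Suppose `⟪β, γ⟫ ≤ 0`. If `⟪β, γ⟫ = 0`, reflecting the root `β - γ` in `γ` gives `β + γ`.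
If `⟪β, γ⟫ < 0`, both Cartan integers are negative: if one is `-1` a reflection gives `β + γ`,
and otherwise `‖β + γ‖² ≤ 0`, so `γ = -β` and `β - γ = β + β`. Either way two elements of
`I` sum to a root.
-/

namespace CrystRS

variable {E : Type} [NormedAddCommGroup E] [InnerProductSpace ℝ E] (R : CrystRS E)
  {β γ : E}

theorem inner_self_pos (hβ : β ∈ R.roots) : 0 < ⟪β, β⟫ :=
  real_inner_self_pos.2 (R.nonzero β hβ)

theorem sub_smul_mem_roots_of_cartan (hβ : β ∈ R.roots) (hγ : γ ∈ R.roots) {n : ℝ}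
    (hn : 2 * ⟪β, γ⟫ = n * ⟪γ, γ⟫) : β - n • γ ∈ R.roots := by
  have hc : 2 * ⟪β, γ⟫ / ⟪γ, γ⟫ = n := by
    rw [hn, mul_div_cancel_right₀ _ (R.inner_self_pos hγ).ne']
  simpa only [hc] using R.reflect β hβ γ hγ

theorem add_mem_roots_of_cartan_eq_neg_one (hβ : β ∈ R.roots) (hγ : γ ∈ R.roots)
    (h : 2 * ⟪β, γ⟫ = -⟪γ, γ⟫) : β + γ ∈ R.roots := by
  have := R.sub_smul_mem_roots_of_cartan hβ hγ (n := -1) (by rw [h, neg_one_mul])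
  rwa [neg_smul, one_smul, sub_neg_eq_add] at this

theorem add_mem_roots_of_inner_eq_zero (hd : β - γ ∈ R.roots) (hγ : γ ∈ R.roots)
    (h : ⟪β, γ⟫ = 0) : β + γ ∈ R.roots := by
  have hn : 2 * ⟪β - γ, γ⟫ = (-2 : ℝ) * ⟪γ, γ⟫ := by rw [inner_sub_left, h]; ring
  have := R.sub_smul_mem_roots_of_cartan hd hγ hn
  rwa [show β - γ - (-2 : ℝ) • γ = β + γ by module] at this

theorem exists_cartan_le_neg_one (hβ : β ∈ R.roots) (hγ : γ ∈ R.roots) (h : ⟪β, γ⟫ < 0) :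
    ∃ n : ℤ, n ≤ -1 ∧ 2 * ⟪β, γ⟫ = n * ⟪γ, γ⟫ := by
  obtain ⟨n, hn⟩ := R.cartan β hβ γ hγ
  have hγγ := R.inner_self_pos hγ
  have : (n : ℝ) < 0 := by nlinarith
  have : n < 0 := by exact_mod_cast this
  exact ⟨n, by omega, hn⟩

theorem add_mem_roots_or_add_eq_zero_of_inner_neg (hβ : β ∈ R.roots) (hγ : γ ∈ R.roots)
    (h : ⟪β, γ⟫ < 0) : β + γ ∈ R.roots ∨ β + γ = 0 := by
  obtain ⟨n, hn, hnβγ⟩ := R.exists_cartan_le_neg_one hβ hγ h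
  obtain ⟨m, hm, hmγβ⟩ := R.exists_cartan_le_neg_one hγ hβ (by rwa [real_inner_comm])
  rcases hn.eq_or_lt with rfl | hn
  · left
    exact R.add_mem_roots_of_cartan_eq_neg_one hβ hγ (by simpa using hnβγ)
  rcases hm.eq_or_lt with rfl | hm
  · left
    rw [add_comm]
    exact R.add_mem_roots_of_cartan_eq_neg_one hγ hβ (by simpa using hmγβ)
  right
  have hn2 : (n : ℝ) ≤ -2 := by exact_mod_cast (by omega : n ≤ -2)
  have hm2 : (m : ℝ) ≤ -2 := by exact_mod_cast (by omega : m ≤ -2)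
  rw [real_inner_comm] at hmγβ
  have hββ := R.inner_self_pos hβ
  have hγγ := R.inner_self_pos hγ
  have hle : ⟪β + γ, β + γ⟫ ≤ 0 := by rw [real_inner_add_add_self]; nlinarith
  exact inner_self_eq_zero.1 (le_antisymm hle real_inner_self_nonneg)

end CrystRS

theorem statement5_general {E : Type} [NormedAddCommGroup E] [InnerProductSpace ℝ E] (R : BasedRS E)
    (I : Set E) (hI : R.IsAbelianIdeal I)
    (β γ : E) (hβ : β ∈ I) (hγ : γ ∈ I) (hd : β - γ ∈ R.roots) :
    0 < ⟪β, γ⟫ := by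
  obtain ⟨hpos, -, hab⟩ := hI
  have hβr : β ∈ R.roots := (hpos hβ).1
  have hγr : γ ∈ R.roots := (hpos hγ).1
  by_contra! hle
  rcases hle.lt_or_eq with hlt | h0
  · rcases R.add_mem_roots_or_add_eq_zero_of_inner_neg hβr hγr hlt with hsum | hsum
    · exact hab β hβ γ hγ hsum
    · rw [eq_neg_of_add_eq_zero_right hsum, sub_neg_eq_add] at hd
      exact hab β hβ β hβ hd
  · exact hab β hβ γ hγ (R.add_mem_roots_of_inner_eq_zero hd hγr h0)

theorem statement5 {E : Type} [NormedAddCommGroup E] [InnerProductSpace ℝ E] (R : BasedRS E) (hirr : R.toCrystRS.Irred)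
    (I : Set E) (hI : R.IsAbelianIdeal I)
    (β γ : E) (hβ : β ∈ I) (hγ : γ ∈ I) (hd : β - γ ∈ R.roots) :
    0 < ⟪β, γ⟫ :=
  statement5_general R I hI β γ hβ hγ hd
end

section
/- Let I be an abelian ideal of Φ⁺, and let β₁, β₂, γ₁, γ₂ ∈ I with β₁ ≠ β₂, β₁ + β₂ = γ₁ + γ₂, and βᵢ ≠ γⱼ for all i, j. Then (βᵢ, γⱼ) > 0 for all i, j ∈ {1,2}; in particular, βᵢ - γⱼ is a root for all i, j. -/
local notation "⟪" x ", " y "⟫" => @inner ℝ _ _ x y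

/-! If two elements of an abelian ideal had nonpositive inner product they would sum to a root.
For a crossing pair `β₁ + β₂ = γ₁ + γ₂` in the ideal, all four inner products are therefore
nonnegative, and if `⟪β₁, γ₁⟫ = 0`, expanding `‖β₁ - γ₂‖² = ⟪β₁ - γ₂, γ₁ - β₂⟫ > 0` forces
`⟪β₂, γ₂⟫ > 0`. Then `β₂ - γ₂ = γ₁ - β₁` is a root, and reflecting it in `β₁` (which is orthogonal
to `γ₁`) gives the root `γ₁ + β₁`, contradicting abelianness. Finally two distinct roots with
positive inner product always have a root as difference. -/

section InnerProductSpace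

variable {E : Type} [NormedAddCommGroup E] [InnerProductSpace ℝ E]

lemma int_mul_le_four_of_cartan {b g : E} {n m : ℤ} (hb : b ≠ 0) (hg : g ≠ 0)
    (hn : 2 * ⟪b, g⟫ = n * ⟪g, g⟫) (hm : 2 * ⟪g, b⟫ = m * ⟪b, b⟫) : n * m ≤ 4 := by
  have hbb : 0 < ⟪b, b⟫ := real_inner_self_pos.mpr hb
  have hgg : 0 < ⟪g, g⟫ := real_inner_self_pos.mpr hg
  have hcs : ⟪b, g⟫ * ⟪b, g⟫ ≤ ⟪b, b⟫ * ⟪g, g⟫ := real_inner_mul_inner_self_le b g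
  have hprod : ((n * m : ℤ) : ℝ) * (⟪b, b⟫ * ⟪g, g⟫) = 4 * (⟪b, g⟫ * ⟪b, g⟫) := by
    rw [real_inner_comm b g] at hm
    push_cast
    linear_combination (-(m * ⟪b, b⟫)) * hn - (2 * ⟪b, g⟫) * hm
  have : ((n * m : ℤ) : ℝ) ≤ 4 := le_of_mul_le_mul_right (by linarith) (mul_pos hbb hgg)
  exact_mod_cast this

end InnerProductSpace

namespace CrystRS

variable {E : Type} [NormedAddCommGroup E] [InnerProductSpace ℝ E] (R : CrystRS E)

lemma inner_self_pos_s6 {b : E} (hb : b ∈ R.roots) : 0 < ⟪b, b⟫ :=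
  real_inner_self_pos.mpr (R.nonzero b hb)

lemma sub_mem_of_two_inner_eq_s6 {b g : E} (hb : b ∈ R.roots) (hg : g ∈ R.roots)
    (h : 2 * ⟪b, g⟫ = ⟪g, g⟫) : b - g ∈ R.roots := by
  have hcoef : 2 * ⟪b, g⟫ / ⟪g, g⟫ = 1 := by rw [h, div_self (R.inner_self_pos_s6 hg).ne']
  simpa only [hcoef, one_smul] using R.reflect b hb g hg

lemma sub_mem_of_inner_pos_s6 {b g : E} (hb : b ∈ R.roots) (hg : g ∈ R.roots)
    (hpos : 0 < ⟪b, g⟫) (hne : b ≠ g) : b - g ∈ R.roots := by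
  obtain ⟨n, hn⟩ := R.cartan b hb g hg
  obtain ⟨m, hm⟩ := R.cartan g hg b hb
  have hbb := R.inner_self_pos_s6 hb
  have hgg := R.inner_self_pos_s6 hg
  rw [real_inner_comm b g] at hm
  have hn0 : 0 < n := by
    have : (0 : ℝ) < n := pos_of_mul_pos_left (by linarith) hgg.le
    exact_mod_cast this
  have hm0 : 0 < m := by
    have : (0 : ℝ) < m := pos_of_mul_pos_left (by linarith) hbb.le
    exact_mod_cast this
  by_cases hn1 : n = 1
  · exact R.sub_mem_of_two_inner_eq_s6 hb hg (by simpa [hn1] using hn)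
  by_cases hm1 : m = 1
  · have hgb := R.sub_mem_of_two_inner_eq_s6 hg hb (by rw [real_inner_comm b g]; simpa [hm1] using hm)
    simpa using R.neg_mem _ hgb
  -- Both Cartan integers are at least 2, so by Cauchy–Schwarz both equal 2, forcing `b = g`.
  exfalso
  have hnm := int_mul_le_four_of_cartan (R.nonzero b hb) (R.nonzero g hg) hn
    (by rwa [real_inner_comm b g])
  obtain ⟨rfl, rfl⟩ : n = 2 ∧ m = 2 := by
    have : 2 ≤ n := by omega
    have : 2 ≤ m := by omega
    constructor <;> nlinarith
  have hzero : ⟪b - g, b - g⟫ = 0 := by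
    rw [inner_sub_sub_self, real_inner_comm b g]
    push_cast at hn hm
    linarith
  exact hne (sub_eq_zero.mp (inner_self_eq_zero.mp hzero))

lemma add_mem_of_inner_neg_s6 {b g : E} (hb : b ∈ R.roots) (hg : g ∈ R.roots)
    (hneg : ⟪b, g⟫ < 0) (hne : b ≠ -g) : b + g ∈ R.roots := by
  simpa using R.sub_mem_of_inner_pos_s6 hb (R.neg_mem g hg) (by simpa [inner_neg_right]) hne

end CrystRS

lemma eq_zero_of_mem_closure_of_neg_mem_closure {V : Type*} [AddCommGroup V] [Module ℝ V]
    {s : Finset V} (hs : LinearIndepOn ℝ id (s : Set V)) {x : V}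
    (hx : x ∈ AddSubmonoid.closure (s : Set V)) (hx' : -x ∈ AddSubmonoid.closure (s : Set V)) :
    x = 0 := by
  obtain ⟨c, -, hc⟩ := AddSubmonoid.mem_closure_finset.mp hx
  obtain ⟨d, -, hd⟩ := AddSubmonoid.mem_closure_finset.mp hx'
  have hcd : ∑ a ∈ s, ((c a : ℝ) + d a) • id a = 0 := by
    simp only [id, add_smul, Finset.sum_add_distrib, Nat.cast_smul_eq_nsmul, hc, hd,
      add_neg_cancel]
  have hc0 : ∀ a ∈ s, c a = 0 := fun a ha => by
    have := linearIndepOn_finset_iff.mp hs _ hcd a ha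
    have : (c a : ℝ) = 0 := by linarith [(d a).cast_nonneg (α := ℝ), (c a).cast_nonneg (α := ℝ)]
    exact_mod_cast this
  rw [← hc]
  exact Finset.sum_eq_zero fun a ha => by rw [hc0 a ha, zero_smul]

namespace BasedRS

variable {E : Type} [NormedAddCommGroup E] [InnerProductSpace ℝ E] (R : BasedRS E)

lemma ne_neg_of_mem_pos {x y : E} (hx : x ∈ R.pos) (hy : y ∈ R.pos) : x ≠ -y := by
  rintro rfl
  exact R.nonzero _ hy.1 (neg_eq_zero.mp
    (eq_zero_of_mem_closure_of_neg_mem_closure R.simple_indep hx.2 (by simpa using hy.2)))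

variable {R} {I : Set E}

lemma IsAbelianIdeal.inner_nonneg (hI : R.IsAbelianIdeal I) {x y : E} (hx : x ∈ I) (hy : y ∈ I) :
    0 ≤ ⟪x, y⟫ := by
  by_contra! h
  exact hI.2.2 x hx y hy (R.add_mem_of_inner_neg_s6 (hI.1 hx).1 (hI.1 hy).1 h
    (R.ne_neg_of_mem_pos (hI.1 hx) (hI.1 hy)))

lemma IsAbelianIdeal.inner_pos_of_add_eq_add (hI : R.IsAbelianIdeal I) {b₁ b₂ g₁ g₂ : E}
    (hb₁ : b₁ ∈ I) (hb₂ : b₂ ∈ I) (hg₁ : g₁ ∈ I) (hg₂ : g₂ ∈ I)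
    (hsum : b₁ + b₂ = g₁ + g₂) (h₁₂ : b₁ ≠ g₂) (h₂₂ : b₂ ≠ g₂) : 0 < ⟪b₁, g₁⟫ := by
  refine (hI.inner_nonneg hb₁ hg₁).lt_of_ne fun h₁₁ => ?_
  have hδ : 0 < ⟪b₁ - g₂, g₁ - b₂⟫ := by
    rw [show g₁ - b₂ = b₁ - g₂ by rw [sub_eq_sub_iff_add_eq_add, hsum]]
    exact real_inner_self_pos.mpr (sub_ne_zero.mpr h₁₂)
  have h₂₂pos : 0 < ⟪b₂, g₂⟫ := by
    simp only [inner_sub_left, inner_sub_right, ← h₁₁] at hδ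
    linarith [real_inner_comm g₂ g₁, real_inner_comm g₂ b₂, hI.inner_nonneg hb₁ hb₂,
      hI.inner_nonneg hg₁ hg₂]
  have hroot : g₁ - b₁ ∈ R.roots := by
    rw [show g₁ - b₁ = b₂ - g₂ by rw [sub_eq_sub_iff_add_eq_add, ← hsum, add_comm]]
    exact R.sub_mem_of_inner_pos_s6 (hI.1 hb₂).1 (hI.1 hg₂).1 h₂₂pos h₂₂
  have hcoef : 2 * ⟪g₁ - b₁, b₁⟫ / ⟪b₁, b₁⟫ = -2 := by
    rw [inner_sub_left, real_inner_comm, ← h₁₁, zero_sub, mul_neg, neg_div,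
      mul_div_cancel_right₀ _ (R.inner_self_pos_s6 (hI.1 hb₁).1).ne']
  have hrefl := R.reflect _ hroot b₁ (hI.1 hb₁).1
  rw [hcoef, show g₁ - b₁ - (-2 : ℝ) • b₁ = g₁ + b₁ by module] at hrefl
  exact hI.2.2 g₁ hg₁ b₁ hb₁ hrefl

end BasedRS

theorem statement6_general {E : Type} [NormedAddCommGroup E] [InnerProductSpace ℝ E] (R : BasedRS E)
    (I : Set E) (hI : R.IsAbelianIdeal I)
    (β₁ β₂ γ₁ γ₂ : E)
    (hb1 : β₁ ∈ I) (hb2 : β₂ ∈ I) (hg1 : γ₁ ∈ I) (hg2 : γ₂ ∈ I)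
    (hsum : β₁ + β₂ = γ₁ + γ₂)
    (h11 : β₁ ≠ γ₁) (h12 : β₁ ≠ γ₂) (h21 : β₂ ≠ γ₁) (h22 : β₂ ≠ γ₂) :
    (0 < ⟪β₁, γ₁⟫ ∧ 0 < ⟪β₁, γ₂⟫ ∧ 0 < ⟪β₂, γ₁⟫ ∧ 0 < ⟪β₂, γ₂⟫) ∧
    (β₁ - γ₁ ∈ R.roots ∧ β₁ - γ₂ ∈ R.roots ∧ β₂ - γ₁ ∈ R.roots ∧ β₂ - γ₂ ∈ R.roots) := by
  have hp11 := hI.inner_pos_of_add_eq_add hb1 hb2 hg1 hg2 hsum h12 h22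
  have hp12 := hI.inner_pos_of_add_eq_add hb1 hb2 hg2 hg1 (hsum.trans (add_comm _ _)) h11 h21
  have hp21 := hI.inner_pos_of_add_eq_add hb2 hb1 hg1 hg2 ((add_comm _ _).trans hsum) h22 h12
  have hp22 := hI.inner_pos_of_add_eq_add hb2 hb1 hg2 hg1
    ((add_comm _ _).trans (hsum.trans (add_comm _ _))) h21 h11
  have root {b g : E} (hb : b ∈ I) (hg : g ∈ I) := R.sub_mem_of_inner_pos_s6 (hI.1 hb).1 (hI.1 hg).1
  exact ⟨⟨hp11, hp12, hp21, hp22⟩, root hb1 hg1 hp11 h11, root hb1 hg2 hp12 h12,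
    root hb2 hg1 hp21 h21, root hb2 hg2 hp22 h22⟩

theorem statement6 {E : Type} [NormedAddCommGroup E] [InnerProductSpace ℝ E] (R : BasedRS E) (hirr : R.toCrystRS.Irred)
    (I : Set E) (hI : R.IsAbelianIdeal I)
    (β₁ β₂ γ₁ γ₂ : E)
    (hb1 : β₁ ∈ I) (hb2 : β₂ ∈ I) (hg1 : γ₁ ∈ I) (hg2 : γ₂ ∈ I)
    (hne : β₁ ≠ β₂) (hsum : β₁ + β₂ = γ₁ + γ₂)
    (h11 : β₁ ≠ γ₁) (h12 : β₁ ≠ γ₂) (h21 : β₂ ≠ γ₁) (h22 : β₂ ≠ γ₂) :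
    (0 < ⟪β₁, γ₁⟫ ∧ 0 < ⟪β₁, γ₂⟫ ∧ 0 < ⟪β₂, γ₁⟫ ∧ 0 < ⟪β₂, γ₂⟫) ∧
    (β₁ - γ₁ ∈ R.roots ∧ β₁ - γ₂ ∈ R.roots ∧ β₂ - γ₁ ∈ R.roots ∧ β₂ - γ₂ ∈ R.roots) :=
  statement6_general R I hI β₁ β₂ γ₁ γ₂ hb1 hb2 hg1 hg2 hsum h11 h12 h21 h22
end

section
/- Let I be an abelian ideal of Φ⁺, and let {β₁, β₂}, {γ₁, γ₂} be crossing pairs in I with β₁ ≠ β₂. If β₁ is a long root, then (β₁, β₂) = 0. -/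
local notation "⟪" x ", " y "⟫" => @inner ℝ _ _ x y

/-! Pair everything with the coroot of the long root `β₁`: as `‖γ‖ ≤ ‖β₁‖`, a root `γ ≠ β₁`
has Cartan integer `⟨γ, β₁^∨⟩ ≤ 1`, so `2 + ⟨β₂, β₁^∨⟩ = ⟨γ₁, β₁^∨⟩ + ⟨γ₂, β₁^∨⟩ ≤ 2`.
Applied to `-β₂ ≠ β₁` the same bound gives `⟨β₂, β₁^∨⟩ ≥ -1`, and the value `-1` is excluded
because then `s_{β₁} β₂ = β₁ + β₂` would be a root, against abelianness. -/

theorem eq_zero_of_mem_closure_of_neg_mem_closure_s8 {V : Type*} [AddCommGroup V] [Module ℝ V]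
    {s : Finset V} (hs : LinearIndependent ℝ (fun α : s => (α : V))) {v : V}
    (hv : v ∈ AddSubmonoid.closure (s : Set V)) (hv' : -v ∈ AddSubmonoid.closure (s : Set V)) :
    v = 0 := by
  obtain ⟨a, rfl⟩ := AddSubmonoid.mem_closure_finset'.mp hv
  obtain ⟨b, hb⟩ := AddSubmonoid.mem_closure_finset'.mp hv'
  have hsum : ∑ α : s, ((a α + b α : ℕ) : ℝ) • (α : V) = 0 := by
    simp only [Nat.cast_add, add_smul, Finset.sum_add_distrib, Nat.cast_smul_eq_nsmul, ← hb,
      add_neg_cancel]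
  have ha : ∀ α, a α = 0 := fun α => by
    have := Fintype.linearIndependent_iff.mp hs _ hsum α
    exact_mod_cast Nat.eq_zero_of_add_eq_zero_right (by exact_mod_cast this)
  simp [ha]

theorem eq_of_norm_le_of_inner_self_le {F : Type*} [NormedAddCommGroup F] [InnerProductSpace ℝ F]
    {β γ : F} (hnorm : ‖γ‖ ≤ ‖β‖) (hinner : ⟪β, β⟫ ≤ ⟪γ, β⟫) : γ = β := by
  have hdist : ‖γ - β‖ ^ 2 ≤ 0 := by
    rw [norm_sub_sq_real, ← real_inner_self_eq_norm_sq β]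
    nlinarith [norm_nonneg γ, norm_nonneg β, real_inner_self_eq_norm_sq β]
  exact sub_eq_zero.mp (norm_eq_zero.mp (by nlinarith [norm_nonneg (γ - β)]))

namespace BasedRS

variable {E : Type} [NormedAddCommGroup E] [InnerProductSpace ℝ E] (R : BasedRS E)

theorem inner_self_pos {β : E} (hβ : β ∈ R.roots) : 0 < ⟪β, β⟫ :=
  real_inner_self_pos.mpr (R.nonzero β hβ)

theorem neg_notMem_pos {β : E} (hβ : β ∈ R.pos) : -β ∉ R.pos := fun hneg =>
  R.nonzero β hβ.1 (eq_zero_of_mem_closure_of_neg_mem_closure_s8 R.simple_indep hβ.2 hneg.2)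

theorem cartan_le_one_of_isLong {β γ : E} (hβ : R.IsLong β) (hγ : γ ∈ R.roots) (hγβ : γ ≠ β)
    {n : ℤ} (hn : 2 * ⟪γ, β⟫ = n * ⟪β, β⟫) : n ≤ 1 := by
  by_contra! h2
  have hpos := R.inner_self_pos hβ.1
  have h2' : (2 : ℝ) ≤ n := by exact_mod_cast h2
  exact hγβ (eq_of_norm_le_of_inner_self_le (hβ.2 γ hγ) (by nlinarith))

theorem neg_one_le_cartan_of_isLong {β γ : E} (hβ : R.IsLong β) (hβpos : β ∈ R.pos)
    (hγ : γ ∈ R.pos) {n : ℤ} (hn : 2 * ⟪γ, β⟫ = n * ⟪β, β⟫) : -1 ≤ n := by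
  have hneg : -γ ≠ β := by
    rintro rfl
    exact R.neg_notMem_pos hγ hβpos
  have := R.cartan_le_one_of_isLong hβ (R.neg_mem γ hγ.1) hneg (n := -n)
    (by rw [inner_neg_left]; push_cast; linarith)
  omega

theorem add_mem_roots_of_cartan_eq_neg_one {β γ : E} (hβ : β ∈ R.roots) (hγ : γ ∈ R.roots)
    (hn : 2 * ⟪γ, β⟫ = -⟪β, β⟫) : γ + β ∈ R.roots := by
  have h := R.reflect γ hγ β hβ
  rwa [hn, neg_div_self (R.inner_self_pos hβ).ne', neg_one_smul, sub_neg_eq_add] at h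

end BasedRS

theorem statement8_general {E : Type} [NormedAddCommGroup E] [InnerProductSpace ℝ E] (R : BasedRS E)
    (I : Set E) (hI : R.IsAbelianIdeal I)
    (β₁ β₂ γ₁ γ₂ : E)
    (hb1 : β₁ ∈ I) (hb2 : β₂ ∈ I) (hg1 : γ₁ ∈ I) (hg2 : γ₂ ∈ I)
    (hsum : β₁ + β₂ = γ₁ + γ₂)
    (h11 : β₁ ≠ γ₁) (h12 : β₁ ≠ γ₂)
    (hlong : R.IsLong β₁) :
    ⟪β₁, β₂⟫ = 0 := by
  obtain ⟨hIpos, -, hab⟩ := hI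
  have hB := R.inner_self_pos hlong.1
  obtain ⟨nb, hnb⟩ := R.cartan β₂ (hIpos hb2).1 β₁ hlong.1
  obtain ⟨n₁, hn₁⟩ := R.cartan γ₁ (hIpos hg1).1 β₁ hlong.1
  obtain ⟨n₂, hn₂⟩ := R.cartan γ₂ (hIpos hg2).1 β₁ hlong.1
  have hle₁ := R.cartan_le_one_of_isLong hlong (hIpos hg1).1 (Ne.symm h11) hn₁
  have hle₂ := R.cartan_le_one_of_isLong hlong (hIpos hg2).1 (Ne.symm h12) hn₂
  have hge := R.neg_one_le_cartan_of_isLong hlong (hIpos hb1) (hIpos hb2) hnb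
  have hne : nb ≠ -1 := by
    rintro rfl
    exact hab β₂ hb2 β₁ hb1 <|
      R.add_mem_roots_of_cartan_eq_neg_one hlong.1 (hIpos hb2).1 (by rw [hnb]; push_cast; ring)
  have hrel : 2 + nb = n₁ + n₂ := by
    have h := congrArg (fun v => 2 * ⟪v, β₁⟫) hsum
    simp only [inner_add_left, mul_add, hnb, hn₁, hn₂] at h
    have hcast : ((2 + nb : ℤ) : ℝ) = n₁ + n₂ := mul_right_cancel₀ hB.ne' (by push_cast; linarith)
    exact_mod_cast hcast
  have hnb0 : nb = 0 := by omega
  rw [real_inner_comm]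
  simpa [hnb0] using hnb

theorem statement8 {E : Type} [NormedAddCommGroup E] [InnerProductSpace ℝ E] (R : BasedRS E) (hirr : R.toCrystRS.Irred)
    (I : Set E) (hI : R.IsAbelianIdeal I)
    (β₁ β₂ γ₁ γ₂ : E)
    (hb1 : β₁ ∈ I) (hb2 : β₂ ∈ I) (hg1 : γ₁ ∈ I) (hg2 : γ₂ ∈ I)
    (hne : β₁ ≠ β₂) (hsum : β₁ + β₂ = γ₁ + γ₂)
    (h11 : β₁ ≠ γ₁) (h12 : β₁ ≠ γ₂) (h21 : β₂ ≠ γ₁) (h22 : β₂ ≠ γ₂)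
    (hlong : R.IsLong β₁) :
    ⟪β₁, β₂⟫ = 0 :=
  statement8_general R I hI β₁ β₂ γ₁ γ₂ hb1 hb2 hg1 hg2 hsum h11 h12 hlong
end

section
/- Let I be an abelian ideal of Φ⁺ and β₁, β₂ ∈ I with β₁ < β₂ (standard partial order) and β₂ - β₁ ∉ Φ. Then there exist γ₁, γ₂ ∈ Φ⁺ with β₁ + β₂ = γ₁ + γ₂ and β₁ < γᵢ < β₂ for i = 1, 2. -/
local notation "⟪" x ", " y "⟫" => @inner ℝ _ _ x y

/-!
Elements of an abelian ideal pair nonnegatively, since a negative inner product would make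
their sum a root; as `β₂ - β₁` is not a root, `β₁` and `β₂` are even orthogonal. Then
`⟪β₁, β₂ - β₁⟫ < 0`, so some simple root `α ≤ β₂ - β₁` has `⟪β₁, α⟫ < 0`, and `γ = β₁ + α` is a
root of `I` with `⟪β₁, γ⟫ > 0`. If `β₂ - γ` is a root, the pair is `γ, β₁ + (β₂ - γ)`. Otherwise,
by induction on the height of `β₂ - β₁`, `γ + β₂ = η₁ + η₂` with `γ < ηᵢ < β₂`. Both `ηᵢ - γ` are
roots summing to `β₂ - γ`, which pairs negatively with `β₁`; so one of them, say `η₁ - γ`, does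
too, and the pair is `β₁ + (η₁ - γ), η₂`.
-/

theorem LinearIndependent.exists_linearMap_eq_one {K V ι : Type*} [Field K] [AddCommGroup V]
    [Module K V] {v : ι → V} (hv : LinearIndependent K v) :
    ∃ f : V →ₗ[K] K, ∀ i, f (v i) = 1 := by
  obtain ⟨f, hf⟩ := LinearMap.exists_extend (Module.Basis.span hv).sumCoords
  refine ⟨f, fun i => ?_⟩
  have := LinearMap.congr_fun hf (Module.Basis.span hv i)
  rwa [Module.Basis.sumCoords_self_apply, LinearMap.comp_apply, Submodule.subtype_apply,
    Module.Basis.span_apply] at this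

section Closure

variable {E : Type*} [AddCommGroup E] [Module ℝ E] {S : Set E} {h : E →ₗ[ℝ] ℝ} {x y : E}

theorem eq_zero_or_one_le_of_mem_closure (hS : ∀ a ∈ S, h a = 1)
    (hx : x ∈ AddSubmonoid.closure S) : x = 0 ∨ 1 ≤ h x := by
  induction hx using AddSubmonoid.closure_induction with
  | mem a ha => exact Or.inr (hS a ha).ge
  | zero => exact Or.inl rfl
  | add x y _ _ ihx ihy =>
    rcases ihx with rfl | hx
    · simpa using ihy
    rcases ihy with rfl | hy
    · exact Or.inr (by simpa using hx)
    right
    rw [map_add]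
    linarith

theorem eq_zero_of_add_eq_zero_of_mem_closure (hS : ∀ a ∈ S, h a = 1)
    (hx : x ∈ AddSubmonoid.closure S) (hy : y ∈ AddSubmonoid.closure S) (hxy : x + y = 0) :
    x = 0 := by
  have hhxy : h x + h y = 0 := by rw [← map_add, hxy, map_zero]
  rcases eq_zero_or_one_le_of_mem_closure hS hx with hx0 | hx1
  · exact hx0
  rcases eq_zero_or_one_le_of_mem_closure hS hy with rfl | hy1
  · simpa using hxy
  · linarith

end Closure

theorem exists_mem_inner_neg_sub_mem_closure {E : Type*} [NormedAddCommGroup E]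
    [InnerProductSpace ℝ E] {S : Set E} (v : E) {x : E} (hx : x ∈ AddSubmonoid.closure S)
    (hv : ⟪v, x⟫ < 0) : ∃ a ∈ S, ⟪v, a⟫ < 0 ∧ x - a ∈ AddSubmonoid.closure S := by
  induction hx using AddSubmonoid.closure_induction with
  | mem a ha => exact ⟨a, ha, hv, by simp⟩
  | zero => simp at hv
  | add x y hx hy ihx ihy =>
    rw [inner_add_right] at hv
    rcases lt_or_ge ⟪v, x⟫ 0 with hvx | hvx
    · obtain ⟨a, ha, hva, hxa⟩ := ihx hvx
      exact ⟨a, ha, hva, by simpa [sub_add_eq_add_sub] using add_mem hxa hy⟩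
    · obtain ⟨a, ha, hva, hya⟩ := ihy (by linarith)
      exact ⟨a, ha, hva, by simpa [add_sub_assoc] using add_mem hx hya⟩

namespace CrystRS

variable {E : Type} [NormedAddCommGroup E] [InnerProductSpace ℝ E] (R : CrystRS E) {x y : E}

theorem inner_self_pos_s10 (hx : x ∈ R.roots) : 0 < ⟪x, x⟫ :=
  real_inner_self_pos.2 (R.nonzero x hx)

theorem sub_smul_mem_roots_of_two_inner_eq (hx : x ∈ R.roots) (hy : y ∈ R.roots) {c : ℝ}
    (hc : 2 * ⟪x, y⟫ = c * ⟪y, y⟫) : x - c • y ∈ R.roots := by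
  have := R.reflect x hx y hy
  rwa [hc, mul_div_cancel_right₀ _ (R.inner_self_pos_s10 hy).ne'] at this

theorem one_le_cartan_of_inner_pos (hy : y ∈ R.roots) (hxy : 0 < ⟪x, y⟫)
    {n : ℤ} (hn : 2 * ⟪x, y⟫ = n * ⟪y, y⟫) : 1 ≤ n := by
  have : (0 : ℝ) < n * ⟪y, y⟫ := by linarith
  have : (0 : ℝ) < n := (pos_iff_pos_of_mul_pos this).2 (R.inner_self_pos_s10 hy)
  exact_mod_cast this

theorem sub_mem_roots_of_inner_pos (hx : x ∈ R.roots) (hy : y ∈ R.roots) (hxy : 0 < ⟪x, y⟫)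
    (hne : x ≠ y) : x - y ∈ R.roots := by
  obtain ⟨n, hn⟩ := R.cartan x hx y hy
  obtain ⟨m, hm⟩ := R.cartan y hy x hx
  rw [real_inner_comm] at hm
  rcases (R.one_le_cartan_of_inner_pos hy hxy hn).eq_or_lt with rfl | hn2
  · simpa using R.sub_smul_mem_roots_of_two_inner_eq hx hy (c := 1) (by simpa using hn)
  rcases (R.one_le_cartan_of_inner_pos hx (by rwa [real_inner_comm]) (by rwa [real_inner_comm])).eq_or_lt
    with rfl | hm2
  · have := R.sub_smul_mem_roots_of_two_inner_eq hy hx (c := 1) (by rw [real_inner_comm]; simpa using hm)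
    simpa using R.neg_mem _ this
  -- both Cartan integers are at least 2, which forces `‖x - y‖² ≤ 0`
  have hn2 : (2 : ℝ) ≤ n := by exact_mod_cast hn2
  have hm2 : (2 : ℝ) ≤ m := by exact_mod_cast hm2
  have hyy : 2 * ⟪y, y⟫ ≤ 2 * ⟪x, y⟫ := by rw [hn]; nlinarith [R.inner_self_pos_s10 hy]
  have hxx : 2 * ⟪x, x⟫ ≤ 2 * ⟪x, y⟫ := by rw [hm]; nlinarith [R.inner_self_pos_s10 hx]
  refine absurd (sub_eq_zero.1 (real_inner_self_nonpos.1 ?_)) hne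
  rw [inner_sub_sub_self, real_inner_comm x y]
  linarith

theorem add_mem_roots_of_inner_neg (hx : x ∈ R.roots) (hy : y ∈ R.roots) (hxy : ⟪x, y⟫ < 0)
    (hne : x ≠ -y) : x + y ∈ R.roots := by
  simpa using R.sub_mem_roots_of_inner_pos hx (R.neg_mem y hy) (by simpa using hxy) hne

theorem add_mem_roots_of_inner_eq_zero_s10 (hy : y ∈ R.roots) (hxy : ⟪x, y⟫ = 0)
    (hsub : x - y ∈ R.roots) : x + y ∈ R.roots := by
  have := R.sub_smul_mem_roots_of_two_inner_eq hsub hy (c := -2)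
    (by rw [inner_sub_left, hxy]; ring)
  rwa [neg_smul, sub_neg_eq_add, two_smul, sub_add_add_cancel] at this

end CrystRS

namespace BasedRS

variable {E : Type} [NormedAddCommGroup E] [InnerProductSpace ℝ E] (R : BasedRS E) {x y z : E}

local notation "M" => AddSubmonoid.closure (R.simple : Set E)

theorem exists_height : ∃ h : E →ₗ[ℝ] ℝ, ∀ a ∈ (R.simple : Set E), h a = 1 := by
  obtain ⟨h, hh⟩ := R.simple_indep.exists_linearMap_eq_one
  exact ⟨h, fun a ha => hh ⟨a, ha⟩⟩

theorem eq_zero_of_add_eq_zero (hx : x ∈ M) (hy : y ∈ M) (hxy : x + y = 0) : x = 0 := by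
  obtain ⟨h, hh⟩ := R.exists_height
  exact eq_zero_of_add_eq_zero_of_mem_closure hh hx hy hxy

theorem ne_neg_of_mem_closure (hx : x ∈ M) (hy : y ∈ M) (hx0 : x ≠ 0) : x ≠ -y :=
  fun e => hx0 (R.eq_zero_of_add_eq_zero hx hy (by rw [e, neg_add_cancel]))

theorem add_mem_roots_of_mem_pos (hx : x ∈ R.pos) (hy : y ∈ R.roots) (hyM : y ∈ M)
    (hxy : ⟪x, y⟫ < 0) : x + y ∈ R.roots :=
  R.add_mem_roots_of_inner_neg hx.1 hy hxy (R.ne_neg_of_mem_closure hx.2 hyM (R.nonzero x hx.1))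

theorem lt_add (hx : x ∈ M) (hx0 : x ≠ 0) (y : E) : R.lt y (y + x) :=
  ⟨by simpa [BasedRS.le] using hx, by simpa using hx0⟩

theorem lt_add_sub (hxy : R.lt x y) (z : E) : R.lt z (z + (y - x)) :=
  R.lt_add hxy.1 (sub_ne_zero.2 hxy.2.symm) z

theorem lt_trans (hxy : R.lt x y) (hyz : R.lt y z) : R.lt x z := by
  refine ⟨by simpa [BasedRS.le] using add_mem hyz.1 hxy.1, fun hxz => hxy.2 ?_⟩
  subst hxz
  have := R.eq_zero_of_add_eq_zero hyz.1 hxy.1 (by abel)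
  exact sub_eq_zero.1 this

theorem lt_of_add_eq {a b c d : E} (habcd : a + b = c + d) (hac : R.lt a c) : R.lt d b := by
  have hdiff : b - d = c - a := by
    rw [sub_eq_sub_iff_add_eq_add, add_comm, habcd, add_comm]
  refine ⟨by rw [BasedRS.le, hdiff]; exact hac.1, fun hdb => hac.2 ?_⟩
  rw [hdb] at habcd
  exact add_right_cancel habcd

theorem mem_pos_of_lt (hx : x ∈ M) (hy : y ∈ R.roots) (hxy : R.lt x y) : y ∈ R.pos :=
  ⟨hy, by simpa using add_mem hx hxy.1⟩

def SplitsBetween (β₁ β₂ γ₁ γ₂ : E) : Prop :=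
  γ₁ ∈ R.pos ∧ γ₂ ∈ R.pos ∧ β₁ + β₂ = γ₁ + γ₂ ∧
    R.lt β₁ γ₁ ∧ R.lt γ₁ β₂ ∧ R.lt β₁ γ₂ ∧ R.lt γ₂ β₂

variable {R}

theorem SplitsBetween.symm {β₁ β₂ γ₁ γ₂ : E} (h : R.SplitsBetween β₁ β₂ γ₁ γ₂) :
    R.SplitsBetween β₁ β₂ γ₂ γ₁ :=
  let ⟨h₁, h₂, hsum, h₁₁, h₁₂, h₂₁, h₂₂⟩ := h
  ⟨h₂, h₁, hsum.trans (add_comm _ _), h₂₁, h₂₂, h₁₁, h₁₂⟩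

theorem splitsBetween_of_lt {β₁ β₂ γ₁ γ₂ : E} (hβ₁ : β₁ ∈ M) (hγ₁ : γ₁ ∈ R.roots)
    (hγ₂ : γ₂ ∈ R.roots) (hsum : β₁ + β₂ = γ₁ + γ₂) (h₁ : R.lt β₁ γ₁) (h₂ : R.lt β₁ γ₂) :
    R.SplitsBetween β₁ β₂ γ₁ γ₂ :=
  ⟨R.mem_pos_of_lt hβ₁ hγ₁ h₁, R.mem_pos_of_lt hβ₁ hγ₂ h₂, hsum, h₁,
    R.lt_of_add_eq (hsum.trans (add_comm _ _)) h₂, h₂, R.lt_of_add_eq hsum h₁⟩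

theorem SplitsBetween.add_sub {β₁ β₂ γ η₁ η₂ : E} (hs : R.SplitsBetween γ β₂ η₁ η₂)
    (hβ₁ : β₁ ∈ R.pos) (hβ₁γ : R.lt β₁ γ) (hζ : η₁ - γ ∈ R.roots) (hβ₁ζ : ⟪β₁, η₁ - γ⟫ < 0) :
    R.SplitsBetween β₁ β₂ (β₁ + (η₁ - γ)) η₂ := by
  obtain ⟨-, hη₂, hsum, hγη₁, -, hγη₂, -⟩ := hs
  refine splitsBetween_of_lt hβ₁.2 (R.add_mem_roots_of_mem_pos hβ₁ hζ hγη₁.1 hβ₁ζ) hη₂.1 ?_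
    (R.lt_add_sub hγη₁ β₁) (R.lt_trans hβ₁γ hγη₂)
  rw [← sub_eq_zero, ← sub_eq_zero.2 hsum]
  abel

namespace IsAbelianIdeal

variable {I : Set E} (hI : R.IsAbelianIdeal I)
include hI

theorem mem_of_lt (hx : x ∈ I) (hy : y ∈ R.roots) (hxy : R.lt x y) : y ∈ I :=
  hI.2.1 x hx y (R.mem_pos_of_lt (hI.1 hx).2 hy hxy) hxy.1

theorem inner_nonneg_s10 (hx : x ∈ I) (hy : y ∈ I) : 0 ≤ ⟪x, y⟫ := by
  by_contra! hxy
  exact hI.2.2 x hx y hy (R.add_mem_roots_of_mem_pos (hI.1 hx) (hI.1 hy).1 (hI.1 hy).2 hxy)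

theorem inner_pos_of_sub_mem_roots (hx : x ∈ I) (hy : y ∈ I) (hxy : y - x ∈ R.roots) :
    0 < ⟪x, y⟫ := by
  refine (hI.inner_nonneg_s10 hx hy).lt_of_ne fun h => hI.2.2 y hy x hx ?_
  exact R.add_mem_roots_of_inner_eq_zero_s10 (hI.1 hx).1 (by rw [real_inner_comm, h]) hxy

theorem inner_eq_zero_of_sub_notMem_roots (hx : x ∈ I) (hy : y ∈ I) (hne : x ≠ y)
    (hxy : y - x ∉ R.roots) : ⟪x, y⟫ = 0 := by
  refine le_antisymm (not_lt.1 fun h => hxy ?_) (hI.inner_nonneg_s10 hx hy)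
  exact R.sub_mem_roots_of_inner_pos (hI.1 hy).1 (hI.1 hx).1 (by rwa [real_inner_comm]) hne.symm

/-- If `η₁ - γ` were not a root, `η₁` would be orthogonal to `γ` and `η₂` to `β`, which forces
`‖γ - η₂‖² ≤ 0`. -/
theorem sub_mem_roots_of_splitsBetween {γ β η₁ η₂ : E} (hγ : γ ∈ I) (hβ : β ∈ I)
    (hγβ : β - γ ∉ R.roots) (hs : R.SplitsBetween γ β η₁ η₂) : η₁ - γ ∈ R.roots := by
  obtain ⟨hη₁, hη₂, hsum, hγη₁, hη₁β, hγη₂, hη₂β⟩ := hs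
  have hη₁I := hI.mem_of_lt hγ hη₁.1 hγη₁
  have hη₂I := hI.mem_of_lt hγ hη₂.1 hγη₂
  by_contra hη₁γ
  have hβη₂ : β - η₂ = η₁ - γ := by
    rw [sub_eq_sub_iff_add_eq_add, add_comm, hsum]
  have hγβ0 := hI.inner_eq_zero_of_sub_notMem_roots hγ hβ (R.lt_trans hγη₁ hη₁β).2 hγβ
  have hγη₁0 := hI.inner_eq_zero_of_sub_notMem_roots hγ hη₁I hγη₁.2 hη₁γ
  have hη₂β0 := hI.inner_eq_zero_of_sub_notMem_roots hη₂I hβ hη₂β.2 (hβη₂ ▸ hη₁γ)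
  have hη₁η₂ := hI.inner_nonneg_s10 hη₁I hη₂I
  have hγsum : ⟪γ, η₁⟫ + ⟪γ, η₂⟫ = ⟪γ, γ⟫ + ⟪γ, β⟫ := by
    rw [← inner_add_right, ← inner_add_right, hsum]
  have hη₂sum : ⟪η₂, η₁⟫ + ⟪η₂, η₂⟫ = ⟪η₂, γ⟫ + ⟪η₂, β⟫ := by
    rw [← inner_add_right, ← inner_add_right, hsum]
  refine hγη₂.2 (sub_eq_zero.1 (real_inner_self_nonpos.1 ?_))
  rw [inner_sub_sub_self, real_inner_comm η₂ γ, real_inner_comm η₂ η₁] at *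
  linarith

theorem exists_add_simple_between {β₁ β₂ : E} (hβ₁ : β₁ ∈ I) (hβ₂ : β₂ ∈ I)
    (hlt : R.lt β₁ β₂) (hdiff : β₂ - β₁ ∉ R.roots) :
    ∃ α ∈ (R.simple : Set E), β₁ + α ∈ I ∧ R.lt β₁ (β₁ + α) ∧ R.lt (β₁ + α) β₂ ∧
      ⟪β₁, β₂ - (β₁ + α)⟫ < 0 := by
  have horth := hI.inner_eq_zero_of_sub_notMem_roots hβ₁ hβ₂ hlt.2 hdiff
  have hβ₁0 := R.inner_self_pos_s10 (hI.1 hβ₁).1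
  obtain ⟨α, hα, hβ₁α, hρ⟩ := exists_mem_inner_neg_sub_mem_closure β₁ hlt.1
    (by rw [inner_sub_right, horth]; linarith)
  have hαroot := R.simple_sub hα
  have hβ₁γ := R.lt_add (AddSubmonoid.subset_closure hα) (R.nonzero α hαroot) β₁
  have hγ := R.add_mem_roots_of_mem_pos (hI.1 hβ₁) hαroot (AddSubmonoid.subset_closure hα) hβ₁α
  have hγI := hI.mem_of_lt hβ₁ hγ hβ₁γ
  have hβ₁γpos := hI.inner_pos_of_sub_mem_roots hβ₁ hγI (by rwa [add_sub_cancel_left])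
  refine ⟨α, hα, hγI, hβ₁γ, ⟨by rwa [BasedRS.le, sub_add_eq_sub_sub], fun e => hdiff ?_⟩, ?_⟩
  · rwa [← e, add_sub_cancel_left]
  · rw [inner_sub_right, horth]
    linarith

theorem exists_splitsBetween_of_height_le {h : E →ₗ[ℝ] ℝ}
    (hh : ∀ a ∈ (R.simple : Set E), h a = 1) (n : ℕ) {β₁ β₂ : E} (hβ₁ : β₁ ∈ I) (hβ₂ : β₂ ∈ I)
    (hlt : R.lt β₁ β₂) (hdiff : β₂ - β₁ ∉ R.roots) (hn : h (β₂ - β₁) ≤ n) :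
    ∃ γ₁ γ₂, R.SplitsBetween β₁ β₂ γ₁ γ₂ := by
  induction n generalizing β₁ with
  | zero =>
    have := (eq_zero_or_one_le_of_mem_closure hh hlt.1).resolve_left (sub_ne_zero.2 hlt.2.symm)
    push_cast at hn
    linarith
  | succ n ih =>
    obtain ⟨α, hα, hγ, hβ₁γ, hγβ₂, hβ₁ρ⟩ := hI.exists_add_simple_between hβ₁ hβ₂ hlt hdiff
    by_cases hρ : β₂ - (β₁ + α) ∈ R.roots
    · refine ⟨β₁ + α, β₁ + (β₂ - (β₁ + α)), splitsBetween_of_lt (hI.1 hβ₁).2 (hI.1 hγ).1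
        (R.add_mem_roots_of_mem_pos (hI.1 hβ₁) hρ hγβ₂.1 hβ₁ρ) (by abel) hβ₁γ
        (R.lt_add_sub hγβ₂ β₁)⟩
    have hheight : h (β₂ - (β₁ + α)) ≤ n := by
      rw [sub_add_eq_sub_sub, map_sub, hh α hα]
      push_cast at hn
      linarith
    obtain ⟨η₁, η₂, hs⟩ := ih hγ hγβ₂ hρ hheight
    have hζsum : ⟪β₁, η₁ - (β₁ + α)⟫ + ⟪β₁, η₂ - (β₁ + α)⟫ = ⟪β₁, β₂ - (β₁ + α)⟫ := by
      rw [← inner_add_right, sub_add_sub_comm, ← hs.2.2.1]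
      abel_nf
    rcases lt_or_ge ⟪β₁, η₁ - (β₁ + α)⟫ 0 with hζ₁ | hζ₁
    · exact ⟨_, _, hs.add_sub (hI.1 hβ₁) hβ₁γ
        (hI.sub_mem_roots_of_splitsBetween hγ hβ₂ hρ hs) hζ₁⟩
    · exact ⟨_, _, (hs.symm.add_sub (hI.1 hβ₁) hβ₁γ
        (hI.sub_mem_roots_of_splitsBetween hγ hβ₂ hρ hs.symm) (by linarith)).symm⟩

end IsAbelianIdeal

end BasedRS

theorem statement10_general {E : Type} [NormedAddCommGroup E] [InnerProductSpace ℝ E] (R : BasedRS E)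
    (I : Set E) (hI : R.IsAbelianIdeal I)
    (β₁ β₂ : E) (hb1 : β₁ ∈ I) (hb2 : β₂ ∈ I)
    (hlt : R.lt β₁ β₂) (hdiff : β₂ - β₁ ∉ R.roots) :
    ∃ γ₁ γ₂ : E, γ₁ ∈ R.pos ∧ γ₂ ∈ R.pos ∧ β₁ + β₂ = γ₁ + γ₂ ∧
      R.lt β₁ γ₁ ∧ R.lt γ₁ β₂ ∧ R.lt β₁ γ₂ ∧ R.lt γ₂ β₂ := by
  obtain ⟨h, hh⟩ := R.exists_height
  obtain ⟨n, hn⟩ := exists_nat_ge (h (β₂ - β₁))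
  exact hI.exists_splitsBetween_of_height_le hh n hb1 hb2 hlt hdiff hn

theorem statement10 {E : Type} [NormedAddCommGroup E] [InnerProductSpace ℝ E] (R : BasedRS E) (hirr : R.toCrystRS.Irred)
    (I : Set E) (hI : R.IsAbelianIdeal I)
    (β₁ β₂ : E) (hb1 : β₁ ∈ I) (hb2 : β₂ ∈ I)
    (hlt : R.lt β₁ β₂) (hdiff : β₂ - β₁ ∉ R.roots) :
    ∃ γ₁ γ₂ : E, γ₁ ∈ R.pos ∧ γ₂ ∈ R.pos ∧ β₁ + β₂ = γ₁ + γ₂ ∧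
      R.lt β₁ γ₁ ∧ R.lt γ₁ β₂ ∧ R.lt β₁ γ₂ ∧ R.lt γ₂ β₂ :=
  statement10_general R I hI β₁ β₂ hb1 hb2 hlt hdiff
end

section
/- Let I be an abelian ideal of Φ⁺ and β₁, β₂ ∈ I with β₂ long. Suppose there exist γ₁, γ₂ ∈ Φ⁺ with β₁ + β₂ = γ₁ + γ₂ and β₁ < γᵢ < β₂ for i = 1, 2. Then β₂ - β₁ ∉ Φ; in fact (β₁, β₂) = 0. -/
local notation "⟪" x ", " y "⟫" => @inner ℝ _ _ x y

namespace CrystRS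

variable {E : Type} [NormedAddCommGroup E] [InnerProductSpace ℝ E] (R : CrystRS E)

theorem sub_intCast_smul_mem {α β : E} (hα : α ∈ R.roots) (hβ : β ∈ R.roots) {n : ℤ}
    (hn : 2 * ⟪α, β⟫ = n * ⟪β, β⟫) : α - (n : ℝ) • β ∈ R.roots := by
  have hββ : ⟪β, β⟫ ≠ 0 := inner_self_ne_zero.2 (R.nonzero β hβ)
  simpa only [hn, mul_div_cancel_right₀ _ hββ] using R.reflect α hα β hβ

theorem add_mem_roots_of_inner_neg_s11 {α β : E} (hα : α ∈ R.roots) (hβ : β ∈ R.roots)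
    (hne : α + β ≠ 0) (hneg : ⟪α, β⟫ < 0) : α + β ∈ R.roots := by
  have hαα : 0 < ⟪α, α⟫ := real_inner_self_pos.2 (R.nonzero α hα)
  have hββ : 0 < ⟪β, β⟫ := real_inner_self_pos.2 (R.nonzero β hβ)
  obtain ⟨n, hn⟩ := R.cartan α hα β hβ
  obtain ⟨m, hm⟩ := R.cartan β hβ α hα
  have hn_neg : n < 0 := by exact_mod_cast (by nlinarith : (n : ℝ) < 0)
  have hm_neg : m < 0 := by exact_mod_cast (by nlinarith [real_inner_comm α β] : (m : ℝ) < 0)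
  rcases (by omega : n = -1 ∨ n ≤ -2) with rfl | hn2
  · simpa using R.sub_intCast_smul_mem hα hβ hn
  rcases (by omega : m = -1 ∨ m ≤ -2) with rfl | hm2
  · simpa [add_comm] using R.sub_intCast_smul_mem hβ hα hm
  rw [real_inner_comm] at hm
  -- Otherwise `n, m ≤ -2`, and Cauchy–Schwarz `nm ≤ 4` forces `n = m = -2`, i.e. `α = -β`.
  have hnm : ((n * m : ℤ) : ℝ) * (⟪α, α⟫ * ⟪β, β⟫) ≤ 4 * (⟪α, α⟫ * ⟪β, β⟫) := by
    push_cast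
    nlinarith [real_inner_mul_inner_self_le α β]
  have hnm4 : n * m ≤ 4 := by exact_mod_cast le_of_mul_le_mul_right hnm (mul_pos hαα hββ)
  obtain ⟨rfl, rfl⟩ : n = -2 ∧ m = -2 := by constructor <;> nlinarith
  have hsq : ⟪α + β, α + β⟫ = 0 := by
    simp only [inner_add_left, inner_add_right, real_inner_comm α β]
    push_cast at hn hm
    linarith
  exact absurd (inner_self_eq_zero.1 hsq) hne

end CrystRS

namespace BasedRS

variable {E : Type} [NormedAddCommGroup E] [InnerProductSpace ℝ E] (R : BasedRS E)

theorem exists_linearMap_pos_of_mem_pos : ∃ f : E →ₗ[ℝ] ℝ, ∀ β ∈ R.pos, 0 < f β := by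
  obtain ⟨f, hf⟩ := R.simple_indep.exists_linearMap_eq_one
  have key : ∀ x ∈ AddSubmonoid.closure (R.simple : Set E), x = 0 ∨ 0 < f x := by
    intro x hx
    induction hx using AddSubmonoid.closure_induction with
    | mem α hα => exact Or.inr ((hf ⟨α, hα⟩).symm ▸ one_pos)
    | zero => exact Or.inl rfl
    | add x y _ _ hx hy =>
      rcases hx with rfl | hx <;> rcases hy with rfl | hy <;> simp_all [add_pos]
  exact ⟨f, fun β ⟨hβ, hcl⟩ => (key β hcl).resolve_left (R.nonzero β hβ)⟩

theorem add_ne_zero_of_mem_pos {β γ : E} (hβ : β ∈ R.pos) (hγ : γ ∈ R.pos) : β + γ ≠ 0 := by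
  obtain ⟨f, hf⟩ := R.exists_linearMap_pos_of_mem_pos
  intro h
  have hf0 : f (β + γ) = 0 := by rw [h, map_zero]
  rw [map_add] at hf0
  linarith [hf β hβ, hf γ hγ]

variable {R}

theorem IsLong.inner_le_half {β γ : E} (hlong : R.IsLong β) (hγ : γ ∈ R.roots) (hne : γ ≠ β) :
    ⟪γ, β⟫ ≤ ⟪β, β⟫ / 2 := by
  obtain ⟨hβ, hmax⟩ := hlong
  obtain ⟨n, hn⟩ := R.cartan γ hγ β hβ
  have hββ : 0 < ⟪β, β⟫ := real_inner_self_pos.2 (R.nonzero β hβ)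
  by_contra! hlt
  have hn1 : (1 : ℤ) < n := by exact_mod_cast (by nlinarith : (1 : ℝ) < n)
  have hn2 : (2 : ℝ) ≤ n := by exact_mod_cast hn1
  -- `(γ, β) ≥ (β, β) ≥ (γ, γ)` makes `‖γ - β‖² ≤ 0`.
  have hγγ : ⟪γ, γ⟫ ≤ ⟪β, β⟫ := by
    rw [real_inner_self_eq_norm_sq, real_inner_self_eq_norm_sq]
    exact pow_le_pow_left₀ (norm_nonneg γ) (hmax γ hγ) 2
  have hsq : ⟪γ - β, γ - β⟫ ≤ 0 := by
    simp only [inner_sub_left, inner_sub_right, real_inner_comm γ β]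
    nlinarith
  exact hne (sub_eq_zero.1 (real_inner_self_nonpos.1 hsq))

end BasedRS

theorem statement11_general {E : Type} [NormedAddCommGroup E] [InnerProductSpace ℝ E] (R : BasedRS E)
    (I : Set E) (hI : R.IsAbelianIdeal I)
    (β₁ β₂ : E) (hb1 : β₁ ∈ I) (hb2 : β₂ ∈ I) (hlong : R.IsLong β₂)
    (γ₁ γ₂ : E) (hg1 : γ₁ ∈ R.pos) (hg2 : γ₂ ∈ R.pos)
    (hsum : β₁ + β₂ = γ₁ + γ₂)
    (hlt3 : R.lt γ₁ β₂) (hlt4 : R.lt γ₂ β₂) :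
    β₂ - β₁ ∉ R.roots ∧ ⟪β₁, β₂⟫ = 0 := by
  obtain ⟨hIpos, -, hIab⟩ := hI
  have hβ₁ := hIpos hb1
  have hβ₂ := hIpos hb2
  have hnonneg : 0 ≤ ⟪β₁, β₂⟫ := not_lt.1 fun hneg => hIab β₁ hb1 β₂ hb2 <|
    R.add_mem_roots_of_inner_neg_s11 hβ₁.1 hβ₂.1 (R.add_ne_zero_of_mem_pos hβ₁ hβ₂) hneg
  have hpair : ⟪β₁, β₂⟫ + ⟪β₂, β₂⟫ = ⟪γ₁, β₂⟫ + ⟪γ₂, β₂⟫ := by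
    simpa only [inner_add_left] using congrArg (⟪·, β₂⟫) hsum
  have horth : ⟪β₁, β₂⟫ = 0 := le_antisymm (by
    linarith [hlong.inner_le_half hg1.1 hlt3.2, hlong.inner_le_half hg2.1 hlt4.2]) hnonneg
  refine ⟨fun hroot => ?_, horth⟩
  have hbound := hlong.inner_le_half hroot (sub_eq_self.not.2 (R.nonzero β₁ hβ₁.1))
  rw [inner_sub_left, horth, sub_zero] at hbound
  linarith [real_inner_self_pos.2 (R.nonzero β₂ hβ₂.1)]

theorem statement11 {E : Type} [NormedAddCommGroup E] [InnerProductSpace ℝ E] (R : BasedRS E) (hirr : R.toCrystRS.Irred)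
    (I : Set E) (hI : R.IsAbelianIdeal I)
    (β₁ β₂ : E) (hb1 : β₁ ∈ I) (hb2 : β₂ ∈ I) (hlong : R.IsLong β₂)
    (γ₁ γ₂ : E) (hg1 : γ₁ ∈ R.pos) (hg2 : γ₂ ∈ R.pos)
    (hsum : β₁ + β₂ = γ₁ + γ₂)
    (hlt1 : R.lt β₁ γ₁) (hlt2 : R.lt β₁ γ₂) (hlt3 : R.lt γ₁ β₂) (hlt4 : R.lt γ₂ β₂) :
    β₂ - β₁ ∉ R.roots ∧ ⟪β₁, β₂⟫ = 0 :=
  statement11_general R I hI β₁ β₂ hb1 hb2 hlong γ₁ γ₂ hg1 hg2 hsum hlt3 hlt4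
end

section
/- Let Φ be a finite irreducible crystallographic root system with simple system Π and highest root θ = Σ m_α α. Let S ⊆ Π and I = Φ⁺ \ Φ(S), where Φ(S) is the root subsystem generated by S. Then I is an ad-nilpotent ideal of Φ⁺, and I is abelian if and only if either S = Π, or S = Π \ {α} for a simple root α with m_α = 1. -/
local notation "⟪" x ", " y "⟫" => @inner ℝ _ _ x y

/-!
Everything is read off the coefficients of roots with respect to the simple roots, extended to
linear functionals `coeff α` on `E`. A positive root outside `Φ(S)` has a positive coefficient at
some simple root `α ∉ S`, and coefficients only grow going up, so `Φ⁺ \ Φ(S)` is an upper set.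
If `S = Π \ {α}` with `m_α = 1`, every element of `Φ⁺ \ Φ(S)` has `α`-coefficient exactly `1`, so
the sum of two of them has coefficient `2 > m_α` and is not a root. In every other case with
`S ≠ Π` the coefficients of `θ` outside `S` add up to at least `2`, because the highest root of an
irreducible system has full support. Peeling simple roots off `θ` one at a time through positive
roots, the first simple root outside `S` that is removed splits a root into two elements of
`Φ⁺ \ Φ(S)`.
-/

namespace CrystRS

variable {E : Type} [NormedAddCommGroup E] [InnerProductSpace ℝ E] (R : CrystRS E)

theorem sub_smul_mem_roots {α β : E} (hα : α ∈ R.roots) (hβ : β ∈ R.roots) {c : ℝ}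
    (hc : 2 * ⟪α, β⟫ = c * ⟪β, β⟫) : α - c • β ∈ R.roots := by
  have hββ : ⟪β, β⟫ ≠ 0 := (real_inner_self_pos.2 (R.nonzero β hβ)).ne'
  have h := R.reflect α hα β hβ
  rwa [hc, mul_div_cancel_right₀ _ hββ] at h

/-- If `n = 2⟪α, β⟫/⟪β, β⟫` and `m = 2⟪β, α⟫/⟪α, α⟫` are both at least `2`, then
`⟪α - β, α - β⟫ ≤ 0`; otherwise one of the two reflections produces `±(α - β)`. -/
theorem sub_mem_roots_of_inner_pos_s12 {α β : E} (hα : α ∈ R.roots) (hβ : β ∈ R.roots)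
    (hpos : 0 < ⟪α, β⟫) (hne : α ≠ β) : α - β ∈ R.roots := by
  obtain ⟨n, hn⟩ := R.cartan α hα β hβ
  obtain ⟨m, hm⟩ := R.cartan β hβ α hα
  rw [real_inner_comm] at hm
  have hαα : 0 < ⟪α, α⟫ := real_inner_self_pos.2 (R.nonzero α hα)
  have hββ : 0 < ⟪β, β⟫ := real_inner_self_pos.2 (R.nonzero β hβ)
  have hn1 : (1 : ℝ) ≤ n := by
    have : (0 : ℝ) < n := pos_of_mul_pos_left (hn ▸ by positivity) hββ.le
    exact_mod_cast (show (0 : ℤ) < n by exact_mod_cast this)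
  have hm1 : (1 : ℝ) ≤ m := by
    have : (0 : ℝ) < m := pos_of_mul_pos_left (hm ▸ by positivity) hαα.le
    exact_mod_cast (show (0 : ℤ) < m by exact_mod_cast this)
  rcases eq_or_lt_of_le hn1 with hn1 | hn2
  · simpa using R.sub_smul_mem_roots hα hβ (c := 1) (by rw [hn, ← hn1])
  rcases eq_or_lt_of_le hm1 with hm1 | hm2
  · have h := R.sub_smul_mem_roots hβ hα (c := 1) (by rw [real_inner_comm, hm, ← hm1])
    simpa using R.neg_mem _ h
  have hn2 : (2 : ℝ) ≤ n := by exact_mod_cast (show (2 : ℤ) ≤ n by exact_mod_cast hn2)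
  have hm2 : (2 : ℝ) ≤ m := by exact_mod_cast (show (2 : ℤ) ≤ m by exact_mod_cast hm2)
  have hsq : ⟪α - β, α - β⟫ ≤ 0 := by
    rw [real_inner_sub_sub_self]
    nlinarith
  exact absurd (sub_eq_zero.1 (real_inner_self_nonpos.1 hsq)) hne

end CrystRS

namespace BasedRS

variable {E : Type} [NormedAddCommGroup E] [InnerProductSpace ℝ E] (R : BasedRS E)

theorem linearIndepOn_simple : LinearIndepOn ℝ id (R.simple : Set E) := R.simple_indep

/-- The coefficient of `α` in the expansion of a vector in a basis of `E` extending the simple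
roots; for `α` simple this is the usual coordinate on the span of the simple roots. -/
noncomputable def coeff (α : E) : E →ₗ[ℝ] ℝ :=
  Finsupp.lapply α ∘ₗ Finsupp.lmapDomain ℝ ℝ Subtype.val ∘ₗ
    (Module.Basis.extend R.linearIndepOn_simple).repr.toLinearMap

theorem coeff_simple [DecidableEq E] {β : E} (hβ : β ∈ R.simple) (α : E) :
    R.coeff α β = if β = α then 1 else 0 := by
  have hb : Module.Basis.extend R.linearIndepOn_simple
      ⟨β, Module.Basis.subset_extend R.linearIndepOn_simple hβ⟩ = β :=
    Module.Basis.extend_apply_self _ _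
  simp only [coeff, LinearMap.comp_apply, LinearEquiv.coe_coe]
  conv_lhs => rw [← hb, Module.Basis.repr_self]
  simp [Finsupp.single_apply]

theorem closure_le_span (K : Type*) [Semiring K] [Module K E] :
    AddSubmonoid.closure (R.simple : Set E) ≤
      (Submodule.span K (R.simple : Set E)).toAddSubmonoid :=
  AddSubmonoid.closure_le.2 Submodule.subset_span

theorem mem_span_of_mem_roots {β : E} (hβ : β ∈ R.roots) :
    β ∈ Submodule.span ℝ (R.simple : Set E) := by
  rcases R.decomp β hβ with h | h
  · exact R.closure_le_span ℝ h
  · simpa using (Submodule.span ℝ (R.simple : Set E)).neg_mem (R.closure_le_span ℝ h)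

theorem sum_coeff_smul {v : E} (hv : v ∈ Submodule.span ℝ (R.simple : Set E)) :
    ∑ α ∈ R.simple, R.coeff α v • α = v := by
  classical
  induction hv using Submodule.span_induction with
  | mem β hβ => simp [R.coeff_simple hβ, Finset.sum_ite_eq, Finset.mem_coe.1 hβ]
  | zero => simp
  | add x y _ _ hx hy => simp [add_smul, Finset.sum_add_distrib, hx, hy]
  | smul c x _ hx => simp [mul_smul, ← Finset.smul_sum, hx]

theorem eq_zero_of_coeff_eq_zero {v : E} (hv : v ∈ Submodule.span ℝ (R.simple : Set E))
    (h : ∀ α ∈ R.simple, R.coeff α v = 0) : v = 0 := by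
  rw [← R.sum_coeff_smul hv]
  exact Finset.sum_eq_zero fun α hα => by rw [h α hα, zero_smul]

theorem coeff_eq_zero_of_mem_span {J : Set E} (hJ : J ⊆ R.simple) {α : E} (hα : α ∉ J) {v : E}
    (hv : v ∈ Submodule.span ℝ J) : R.coeff α v = 0 := by
  classical
  refine (Submodule.span_le (p := LinearMap.ker (R.coeff α))).2 (fun β hβ => ?_) hv
  simp [R.coeff_simple (hJ hβ), show β ≠ α from fun h => hα (h ▸ hβ)]

theorem exists_nat_coeff_eq {v : E} (hv : v ∈ AddSubmonoid.closure (R.simple : Set E)) (α : E) :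
    ∃ n : ℕ, R.coeff α v = n := by
  classical
  induction hv using AddSubmonoid.closure_induction with
  | mem β hβ => exact ⟨if β = α then 1 else 0, by simp [R.coeff_simple hβ]⟩
  | zero => exact ⟨0, by simp⟩
  | add x y _ _ hx hy =>
      obtain ⟨m, hm⟩ := hx
      obtain ⟨n, hn⟩ := hy
      exact ⟨m + n, by simp [hm, hn]⟩

theorem coeff_nonneg {v : E} (hv : v ∈ AddSubmonoid.closure (R.simple : Set E)) (α : E) :
    0 ≤ R.coeff α v := by
  obtain ⟨n, hn⟩ := R.exists_nat_coeff_eq hv α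
  exact hn ▸ n.cast_nonneg

theorem mem_span_int_iff {S : Finset E} (hS : S ⊆ R.simple) {v : E}
    (hv : v ∈ Submodule.span ℤ (R.simple : Set E)) :
    v ∈ Submodule.span ℤ (S : Set E) ↔ ∀ α ∈ R.simple, α ∉ S → R.coeff α v = 0 := by
  constructor
  · intro h α _ hαS
    exact R.coeff_eq_zero_of_mem_span (Finset.coe_subset.2 hS) hαS
      (Submodule.span_le_restrictScalars ℤ ℝ _ h)
  · classical
    intro h
    obtain ⟨f, -, rfl⟩ := Submodule.mem_span_finset.1 hv
    have hf : ∀ α ∈ R.simple, α ∉ S → f α = 0 := fun α hα hαS => by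
      have h' := h α hα hαS
      rw [map_sum, Finset.sum_eq_single_of_mem α hα fun β hβ hβα => by
        simp [R.coeff_simple hβ, hβα]] at h'
      simpa [R.coeff_simple hα] using h'
    rw [← Finset.sum_subset hS fun α hα hαS => by rw [hf α hα hαS, zero_smul]]
    exact Submodule.sum_mem _ fun α hα => Submodule.smul_mem _ _ (Submodule.subset_span hα)

theorem mem_pos_of_mem_simple {δ : E} (hδ : δ ∈ R.simple) : δ ∈ R.pos :=
  ⟨R.simple_sub hδ, AddSubmonoid.subset_closure hδ⟩

theorem mem_pos_or_neg_mem_pos {ρ : E} (hρ : ρ ∈ R.roots) : ρ ∈ R.pos ∨ -ρ ∈ R.pos :=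
  (R.decomp ρ hρ).imp (⟨hρ, ·⟩) (⟨R.neg_mem ρ hρ, ·⟩)

theorem eq_zero_or_eq_zero_of_add_eq_simple {a b δ : E}
    (ha : a ∈ AddSubmonoid.closure (R.simple : Set E))
    (hb : b ∈ AddSubmonoid.closure (R.simple : Set E)) (hδ : δ ∈ R.simple) (h : a + b = δ) :
    a = 0 ∨ b = 0 := by
  classical
  have hsum : ∀ α, R.coeff α a + R.coeff α b = if δ = α then 1 else 0 := fun α => by
    rw [← map_add, h, R.coeff_simple hδ]
  have h_of_coeff : ∀ x ∈ AddSubmonoid.closure (R.simple : Set E),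
      (∀ α, α ≠ δ → R.coeff α x ≤ R.coeff α a + R.coeff α b) → R.coeff δ x = 0 → x = 0 := by
    intro x hx hle hxδ
    refine R.eq_zero_of_coeff_eq_zero (R.closure_le_span ℝ hx) fun α _ => ?_
    rcases eq_or_ne α δ with rfl | hαδ
    · exact hxδ
    · have := hle α hαδ
      rw [hsum, if_neg (Ne.symm hαδ)] at this
      exact le_antisymm this (R.coeff_nonneg hx α)
  obtain ⟨m, hm⟩ := R.exists_nat_coeff_eq ha δ
  obtain ⟨n, hn⟩ := R.exists_nat_coeff_eq hb δ
  have hmn : m + n = 1 := by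
    have := hsum δ
    rw [if_pos rfl, hm, hn] at this
    exact_mod_cast this
  rcases Nat.add_eq_one_iff.1 hmn with ⟨rfl, -⟩ | ⟨-, rfl⟩
  · exact Or.inl (h_of_coeff a ha (fun α _ => le_add_of_nonneg_right (R.coeff_nonneg hb α))
      (by simpa using hm))
  · exact Or.inr (h_of_coeff b hb (fun α _ => le_add_of_nonneg_left (R.coeff_nonneg ha α))
      (by simpa using hn))

theorem exists_sub_simple_mem_pos {ρ : E} (hρ : ρ ∈ R.pos) (hns : ρ ∉ R.simple) :
    ∃ δ ∈ R.simple, ρ - δ ∈ R.pos := by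
  have hρρ : 0 < ∑ δ ∈ R.simple, R.coeff δ ρ * ⟪ρ, δ⟫ := calc
    0 < ⟪ρ, ρ⟫ := real_inner_self_pos.2 (R.nonzero ρ hρ.1)
    _ = ⟪ρ, ∑ δ ∈ R.simple, R.coeff δ ρ • δ⟫ := by
      rw [R.sum_coeff_smul (R.mem_span_of_mem_roots hρ.1)]
    _ = _ := by simp only [inner_sum, real_inner_smul_right]
  obtain ⟨δ, hδ, hpos⟩ := Finset.exists_lt_of_sum_lt (f := fun _ => (0 : ℝ)) (by simpa using hρρ)
  have hinner : 0 < ⟪ρ, δ⟫ := pos_of_mul_pos_right hpos (R.coeff_nonneg hρ.2 δ)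
  have hroot : ρ - δ ∈ R.roots := R.sub_mem_roots_of_inner_pos_s12 hρ.1 (R.simple_sub hδ) hinner
    (fun h => hns (h ▸ hδ))
  refine ⟨δ, hδ, hroot, (R.decomp _ hroot).resolve_right fun hneg => ?_⟩
  rcases R.eq_zero_or_eq_zero_of_add_eq_simple hρ.2 hneg hδ (by abel) with h0 | h0
  · exact R.nonzero ρ hρ.1 h0
  · exact R.nonzero _ hroot (neg_eq_zero.1 h0)

/-- Induction on the height `∑ α, coeff α ρ` of a positive root. -/
theorem pos_induction {P : E → Prop} (simple : ∀ δ ∈ R.simple, P δ)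
    (step : ∀ ρ ∈ R.pos, ∀ δ ∈ R.simple, ρ - δ ∈ R.pos → P (ρ - δ) → P ρ) :
    ∀ ρ ∈ R.pos, P ρ := by
  classical
  suffices h : ∀ n : ℕ, ∀ ρ ∈ R.pos, ∑ α ∈ R.simple, R.coeff α ρ < n → P ρ from
    fun ρ hρ => h (⌊∑ α ∈ R.simple, R.coeff α ρ⌋₊ + 1) ρ hρ (by
      push_cast; exact Nat.lt_floor_add_one _)
  intro n
  induction n with
  | zero =>
    intro ρ hρ hlt
    exact absurd hlt (not_lt.2 (by simpa using Finset.sum_nonneg fun α _ => R.coeff_nonneg hρ.2 α))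
  | succ n ih =>
    intro ρ hρ hlt
    by_cases hs : ρ ∈ R.simple
    · exact simple ρ hs
    obtain ⟨δ, hδ, hsub⟩ := R.exists_sub_simple_mem_pos hρ hs
    refine step ρ hρ δ hδ hsub (ih _ hsub ?_)
    simp only [map_sub, Finset.sum_sub_distrib, R.coeff_simple hδ, Finset.sum_ite_eq, if_pos hδ]
    push_cast at hlt
    linarith

theorem sub_simple_notMem_roots {γ δ : E} (hγ : γ ∈ R.pos) (hδ : δ ∈ R.simple)
    (hγδ : R.coeff δ γ = 0) : γ - δ ∉ R.roots := by
  classical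
  intro hroot
  obtain ⟨α, -, hα⟩ : ∃ α ∈ R.simple, R.coeff α γ ≠ 0 := by
    by_contra! h
    exact R.nonzero γ hγ.1 (R.eq_zero_of_coeff_eq_zero (R.mem_span_of_mem_roots hγ.1) h)
  have hαδ : δ ≠ α := fun h => hα (h ▸ hγδ)
  rcases R.decomp _ hroot with h | h
  · have := R.coeff_nonneg h δ
    norm_num [R.coeff_simple hδ, hγδ] at this
  · have := R.coeff_nonneg h α
    rw [neg_sub, map_sub, R.coeff_simple hδ, if_neg hαδ, zero_sub, neg_nonneg] at this
    exact hα (le_antisymm this (R.coeff_nonneg hγ.2 α))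

/-- The `δ`-string through `γ` starts at `γ` and has length `2⟪γ, δ⟫/⟪δ, δ⟫ = 0`. -/
theorem add_simple_notMem_roots {γ δ : E} (hγ : γ ∈ R.pos) (hδ : δ ∈ R.simple)
    (hγδ : R.coeff δ γ = 0) (horth : ⟪γ, δ⟫ = 0) : γ + δ ∉ R.roots := by
  intro hroot
  have h := R.sub_smul_mem_roots hroot (R.simple_sub hδ) (c := 2)
    (by rw [inner_add_left, horth]; ring)
  refine R.sub_simple_notMem_roots hγ hδ hγδ ?_
  rwa [two_smul, add_sub_add_right_eq_sub] at h

theorem inner_simple_nonpos {α β : E} (hα : α ∈ R.simple) (hβ : β ∈ R.simple) (hne : α ≠ β) :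
    ⟪α, β⟫ ≤ 0 := by
  classical
  by_contra! h
  exact R.sub_simple_notMem_roots (R.mem_pos_of_mem_simple hα) hβ
    (by simp [R.coeff_simple hα, hne])
    (R.sub_mem_roots_of_inner_pos_s12 (R.simple_sub hα) (R.simple_sub hβ) h hne)

theorem add_simple_notMem_roots_of_mem_span {J : Finset E} (hJ : J ⊆ R.simple) {γ δ : E}
    (hγ : γ ∈ R.pos) (hγJ : γ ∈ Submodule.span ℝ (J : Set E)) (hδ : δ ∈ R.simple)
    (horth : ∀ x ∈ J, ⟪x, δ⟫ = 0) : γ + δ ∉ R.roots := by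
  have hδJ : δ ∉ J := fun h => R.nonzero δ (R.simple_sub hδ) (inner_self_eq_zero.1 (horth δ h))
  have hγδ : γ ∈ (ℝ ∙ δ)ᗮ := Submodule.span_le.2
    (fun x hx => Submodule.mem_orthogonal_singleton_iff_inner_left.2 (horth x hx)) hγJ
  exact R.add_simple_notMem_roots hγ hδ
    (R.coeff_eq_zero_of_mem_span (Finset.coe_subset.2 hJ) hδJ hγJ)
    (Submodule.mem_orthogonal_singleton_iff_inner_left.1 hγδ)

theorem mem_span_or_mem_span_of_orthogonal [DecidableEq E] {J K : Finset E} (hJK : R.simple = J ∪ K)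
    (horth : ∀ x ∈ J, ∀ y ∈ K, ⟪x, y⟫ = 0) :
    ∀ ρ ∈ R.pos, ρ ∈ Submodule.span ℝ (J : Set E) ∨ ρ ∈ Submodule.span ℝ (K : Set E) := by
  have hJ : J ⊆ R.simple := hJK ▸ Finset.subset_union_left
  have hK : K ⊆ R.simple := hJK ▸ Finset.subset_union_right
  refine R.pos_induction (fun δ hδ => ?_) (fun ρ hρ δ hδ hsub ih => ?_)
  · rw [hJK, Finset.mem_union] at hδ
    exact hδ.imp (Submodule.subset_span ·) (Submodule.subset_span ·)
  have hroot : ρ - δ + δ ∈ R.roots := by simpa using hρ.1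
  have hδJK := hδ
  rw [hJK, Finset.mem_union] at hδJK
  rcases ih with hρJ | hρK <;> rcases hδJK with hδJ | hδK
  · exact Or.inl (by simpa using add_mem hρJ (Submodule.subset_span hδJ))
  · exact absurd hroot (R.add_simple_notMem_roots_of_mem_span hJ hsub hρJ hδ
      fun x hx => horth x hx δ hδK)
  · exact absurd hroot (R.add_simple_notMem_roots_of_mem_span hK hsub hρK hδ
      fun y hy => real_inner_comm δ y ▸ horth δ hδJ y hy)
  · exact Or.inr (by simpa using add_mem hρK (Submodule.subset_span hδK))

section Highest

variable {R} {θ : E} (hθ : R.IsHighest θ)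
include hθ

theorem coeff_le_coeff_highest {ρ : E} (hρ : ρ ∈ R.roots) (α : E) :
    R.coeff α ρ ≤ R.coeff α θ := by
  have := R.coeff_nonneg (hθ.2 ρ hρ) α
  rwa [map_sub, sub_nonneg] at this

theorem inner_highest_simple_nonneg {α : E} (hα : α ∈ R.simple) : 0 ≤ ⟪θ, α⟫ := by
  classical
  by_contra! h
  have hne : θ ≠ -α := by
    rintro rfl
    have := R.coeff_nonneg hθ.1.2 α
    norm_num [R.coeff_simple hα] at this
  have hroot : θ + α ∈ R.roots := by
    simpa using R.sub_mem_roots_of_inner_pos_s12 hθ.1.1 (R.neg_mem α (R.simple_sub hα))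
      (by rw [inner_neg_right]; linarith) hne
  have := coeff_le_coeff_highest hθ hroot α
  norm_num [R.coeff_simple hα] at this

theorem inner_simple_eq_zero_of_coeff_highest {x y : E} (hx : x ∈ R.simple) (hy : y ∈ R.simple)
    (hxθ : R.coeff x θ ≠ 0) (hyθ : R.coeff y θ = 0) : ⟪x, y⟫ = 0 := by
  have hterm : ∀ z ∈ R.simple, R.coeff z θ * ⟪z, y⟫ ≤ 0 := fun z hz => by
    rcases eq_or_ne z y with rfl | hzy
    · simp [hyθ]
    · exact mul_nonpos_of_nonneg_of_nonpos (R.coeff_nonneg hθ.1.2 z)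
        (R.inner_simple_nonpos hz hy hzy)
  have hsum : ∑ z ∈ R.simple, R.coeff z θ * ⟪z, y⟫ = 0 := by
    refine le_antisymm (Finset.sum_nonpos hterm) ?_
    calc 0 ≤ ⟪θ, y⟫ := inner_highest_simple_nonneg hθ hy
      _ = ⟪∑ z ∈ R.simple, R.coeff z θ • z, y⟫ := by
        rw [R.sum_coeff_smul (R.mem_span_of_mem_roots hθ.1.1)]
      _ = _ := by simp only [sum_inner, real_inner_smul_left]
  have := (Finset.sum_eq_zero_iff_of_nonpos hterm).1 hsum x hx
  exact (mul_eq_zero.1 this).resolve_left hxθ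

/-- Splitting the simple roots according to the support of `θ` gives an orthogonal decomposition
of the roots, which irreducibility forbids unless the support is everything. -/
theorem coeff_highest_ne_zero (hirr : R.Irred) {α : E} (hα : α ∈ R.simple) :
    R.coeff α θ ≠ 0 := by
  classical
  intro hαθ
  set J := R.simple.filter (R.coeff · θ ≠ 0)
  set K := R.simple.filter (R.coeff · θ = 0)
  have hJK : R.simple = J ∪ K := by
    rw [← Finset.filter_or, Finset.filter_true_of_mem fun x _ => ne_or_eq _ _]
  have horth : ∀ x ∈ J, ∀ y ∈ K, ⟪x, y⟫ = 0 := fun x hx y hy =>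
    inner_simple_eq_zero_of_coeff_highest hθ (Finset.mem_filter.1 hx).1
      (Finset.mem_filter.1 hy).1 (Finset.mem_filter.1 hx).2 (Finset.mem_filter.1 hy).2
  have hsplit := R.mem_span_or_mem_span_of_orthogonal hJK horth
  have hcover : R.roots = (R.roots ∩ Submodule.span ℝ (J : Set E)) ∪
      (R.roots ∩ Submodule.span ℝ (K : Set E)) := by
    ext ρ
    refine ⟨fun hρ => ?_, fun h => h.elim (·.1) (·.1)⟩
    rcases R.mem_pos_or_neg_mem_pos hρ with h | h
    · exact (hsplit ρ h).imp (⟨hρ, ·⟩) (⟨hρ, ·⟩)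
    · exact (hsplit _ h).imp (⟨hρ, by simpa using ·⟩) (⟨hρ, by simpa using ·⟩)
  have hθJ : θ ∈ Submodule.span ℝ (J : Set E) := by
    rw [← R.sum_coeff_smul (R.mem_span_of_mem_roots hθ.1.1),
      ← Finset.sum_filter_of_ne fun x _ h => left_ne_zero_of_smul h]
    exact Submodule.sum_mem _ fun x hx => Submodule.smul_mem _ _ (Submodule.subset_span hx)
  rcases hirr _ _ hcover (fun a ha b hb => (Submodule.isOrtho_span.2 horth).inner_eq ha.2 hb.2)
    with h | h
  · exact (Set.eq_empty_iff_forall_notMem.1 h) θ ⟨hθ.1.1, hθJ⟩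
  · exact (Set.eq_empty_iff_forall_notMem.1 h) α
      ⟨R.simple_sub hα, Submodule.subset_span (Finset.mem_filter.2 ⟨hα, hαθ⟩)⟩

theorem one_le_coeff_highest (hirr : R.Irred) {α : E} (hα : α ∈ R.simple) :
    1 ≤ R.coeff α θ := by
  obtain ⟨n, hn⟩ := R.exists_nat_coeff_eq hθ.1.2 α
  have := coeff_highest_ne_zero hθ hirr hα
  rw [hn] at this ⊢
  exact_mod_cast Nat.one_le_iff_ne_zero.2 (by exact_mod_cast this)

end Highest

theorem coeffOne_iff {θ α : E} (hθ : θ ∈ AddSubmonoid.closure (R.simple : Set E))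
    (hα : α ∈ R.simple) : R.coeffOne α θ ↔ R.coeff α θ = 1 := by
  classical
  have hsub : θ - α ∈ Submodule.span ℤ (R.simple : Set E) :=
    sub_mem (R.closure_le_span ℤ hθ) (Submodule.subset_span hα)
  rw [coeffOne, ← Finset.coe_singleton, ← Finset.coe_sdiff,
    R.mem_span_int_iff Finset.sdiff_subset hsub]
  refine ⟨fun h => ?_, fun h x hx hxα => ?_⟩
  · simpa [R.coeff_simple hα, sub_eq_zero] using h α hα (by simp)
  · obtain rfl : x = α := by simpa [hx] using hxα
    simp [R.coeff_simple hα, h]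

/-- The roots of the nilradical of the standard parabolic subalgebra `𝔭_S`, i.e. `Φ⁺ \ Φ(S)`. -/
def parabolicNilradical (S : Finset E) : Set E :=
  R.pos \ (R.roots ∩ (Submodule.span ℤ (S : Set E) : Set E))

section Parabolic

variable {R} {S : Finset E} (hS : S ⊆ R.simple)
include hS

theorem mem_parabolicNilradical_iff {ρ : E} :
    ρ ∈ R.parabolicNilradical S ↔ ρ ∈ R.pos ∧ ∃ α ∈ R.simple, α ∉ S ∧ R.coeff α ρ ≠ 0 := by
  have hspan {ρ : E} (hρ : ρ ∈ R.pos) :=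
    R.mem_span_int_iff hS (R.closure_le_span ℤ hρ.2)
  constructor
  · rintro ⟨hρ, hρS⟩
    refine ⟨hρ, ?_⟩
    by_contra! h
    exact hρS ⟨hρ.1, (hspan hρ).2 h⟩
  · rintro ⟨hρ, α, hα, hαS, hne⟩
    exact ⟨hρ, fun h => hne ((hspan hρ).1 h.2 α hα hαS)⟩

theorem mem_parabolicNilradical_of_le {β γ : E} (hβ : β ∈ R.parabolicNilradical S)
    (hγ : γ ∈ R.pos) (hle : R.le β γ) : γ ∈ R.parabolicNilradical S := by
  obtain ⟨hβ, α, hα, hαS, hne⟩ := (mem_parabolicNilradical_iff hS).1 hβ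
  refine (mem_parabolicNilradical_iff hS).2 ⟨hγ, α, hα, hαS, ?_⟩
  have hβα := lt_of_le_of_ne (R.coeff_nonneg hβ.2 α) hne.symm
  have hγβ := R.coeff_nonneg hle α
  rw [map_sub, sub_nonneg] at hγβ
  exact (hβα.trans_le hγβ).ne'

theorem exists_add_mem_roots_of_two_le [DecidableEq E] :
    ∀ ρ ∈ R.pos, 2 ≤ ∑ α ∈ R.simple \ S, R.coeff α ρ →
      ∃ β ∈ R.parabolicNilradical S, ∃ γ ∈ R.parabolicNilradical S, β + γ ∈ R.roots := by
  have hsimple : ∀ δ ∈ R.simple, ∑ α ∈ R.simple \ S, R.coeff α δ = if δ ∈ S then 0 else 1 :=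
    fun δ hδ => by simp [R.coeff_simple hδ, Finset.sum_ite_eq, hδ]
  refine R.pos_induction (fun δ hδ h => ?_) (fun ρ hρ δ hδ hsub ih h => ?_)
  · rw [hsimple δ hδ] at h
    split_ifs at h <;> norm_num at h
  have hρδ : ∑ α ∈ R.simple \ S, R.coeff α (ρ - δ) =
      ∑ α ∈ R.simple \ S, R.coeff α ρ - if δ ∈ S then 0 else 1 := by
    simp only [map_sub, Finset.sum_sub_distrib, hsimple δ hδ]
  by_cases hδS : δ ∈ S
  · rw [if_pos hδS, sub_zero] at hρδ
    exact ih (hρδ ▸ h)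
  rw [if_neg hδS] at hρδ
  have hpos : 0 < ∑ α ∈ R.simple \ S, R.coeff α (ρ - δ) := by linarith
  obtain ⟨α, hα, hne⟩ := Finset.exists_ne_zero_of_sum_ne_zero hpos.ne'
  rw [Finset.mem_sdiff] at hα
  refine ⟨ρ - δ, (mem_parabolicNilradical_iff hS).2 ⟨hsub, α, hα.1, hα.2, hne⟩, δ,
    (mem_parabolicNilradical_iff hS).2 ⟨R.mem_pos_of_mem_simple hδ, δ, hδ, hδS, ?_⟩,
    by simpa using hρ.1⟩
  simp [R.coeff_simple hδ]

theorem two_le_sum_coeff_highest [DecidableEq E] (hirr : R.Irred) {θ : E} (hθ : R.IsHighest θ)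
    (hne : S ≠ R.simple) (hmin : ∀ α ∈ R.simple, S = R.simple \ {α} → R.coeff α θ ≠ 1) :
    2 ≤ ∑ α ∈ R.simple \ S, R.coeff α θ := by
  have hcompl : (R.simple \ S).Nonempty :=
    Finset.sdiff_nonempty.2 fun h => hne (Finset.Subset.antisymm hS h)
  rcases hcompl.exists_eq_singleton_or_nontrivial with ⟨α, hα⟩ | ⟨a, ha, b, hb, hab⟩
  · have hαs : α ∈ R.simple := Finset.mem_sdiff.1 (hα ▸ Finset.mem_singleton_self α) |>.1
    have hSα : S = R.simple \ {α} := by rw [← hα, Finset.sdiff_sdiff_eq_self hS]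
    obtain ⟨n, hn⟩ := R.exists_nat_coeff_eq hθ.1.2 α
    have h1 : 1 ≤ n := by exact_mod_cast hn ▸ one_le_coeff_highest hθ hirr hαs
    have h2 : n ≠ 1 := by exact_mod_cast hn ▸ hmin α hαs hSα
    rw [hα, Finset.sum_singleton, hn]
    exact_mod_cast (by omega : 2 ≤ n)
  · calc (2 : ℝ) ≤ R.coeff a θ + R.coeff b θ := by
          linarith [one_le_coeff_highest hθ hirr (Finset.mem_sdiff.1 ha).1,
            one_le_coeff_highest hθ hirr (Finset.mem_sdiff.1 hb).1]
      _ = ∑ α ∈ {a, b}, R.coeff α θ := (Finset.sum_pair hab).symm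
      _ ≤ ∑ α ∈ R.simple \ S, R.coeff α θ :=
          Finset.sum_le_sum_of_subset_of_nonneg (Finset.insert_subset ha
            (Finset.singleton_subset_iff.2 hb)) fun α _ _ => R.coeff_nonneg hθ.1.2 α

end Parabolic

theorem add_notMem_roots_of_coeff_highest_eq_one [DecidableEq E] {θ : E} (hθ : R.IsHighest θ)
    {α : E} (hα : α ∈ R.simple) (hθα : R.coeff α θ = 1) {β γ : E}
    (hβ : β ∈ R.parabolicNilradical (R.simple \ {α}))
    (hγ : γ ∈ R.parabolicNilradical (R.simple \ {α})) : β + γ ∉ R.roots := by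
  have hone : ∀ ρ ∈ R.parabolicNilradical (R.simple \ {α}), R.coeff α ρ = 1 := by
    intro ρ hρI
    obtain ⟨hρ, α', hα', hα'S, hne⟩ :=
      (mem_parabolicNilradical_iff Finset.sdiff_subset).1 hρI
    obtain rfl : α' = α := by simpa [hα'] using hα'S
    obtain ⟨n, hn⟩ := R.exists_nat_coeff_eq hρ.2 α'
    have h1 : n ≠ 0 := by exact_mod_cast hn ▸ hne
    have h2 : n ≤ 1 := by exact_mod_cast hn ▸ hθα ▸ coeff_le_coeff_highest hθ hρ.1 α'
    rw [hn]
    exact_mod_cast (by omega : n = 1)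
  intro hsum
  have := coeff_le_coeff_highest hθ hsum α
  rw [map_add, hone β hβ, hone γ hγ, hθα] at this
  norm_num at this

end BasedRS

theorem statement12 {E : Type} [NormedAddCommGroup E] [InnerProductSpace ℝ E]
    [DecidableEq E] (R : BasedRS E) (hirr : R.toCrystRS.Irred)
    (θ : E) (hθ : R.IsHighest θ)
    (S : Finset E) (hS : S ⊆ R.simple) :
    (∀ β ∈ R.pos \ (R.roots ∩ (Submodule.span ℤ (S : Set E) : Set E)),
      ∀ γ ∈ R.pos, R.le β γ →
        γ ∈ R.pos \ (R.roots ∩ (Submodule.span ℤ (S : Set E) : Set E))) ∧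
    ((∀ β ∈ R.pos \ (R.roots ∩ (Submodule.span ℤ (S : Set E) : Set E)),
      ∀ γ ∈ R.pos \ (R.roots ∩ (Submodule.span ℤ (S : Set E) : Set E)),
        β + γ ∉ R.roots) ↔
      (S = R.simple ∨ ∃ α ∈ R.simple, S = R.simple \ {α} ∧ R.coeffOne α θ)) := by
  refine ⟨fun β hβ γ hγ hle => BasedRS.mem_parabolicNilradical_of_le hS hβ hγ hle,
    fun habelian => ?_, ?_⟩
  · by_contra! h
    obtain ⟨β, hβ, γ, hγ, hsum⟩ := BasedRS.exists_add_mem_roots_of_two_le hS θ hθ.1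
      (BasedRS.two_le_sum_coeff_highest hS hirr hθ h.1 fun α hα hSα hθα =>
        h.2 α hα hSα ((R.coeffOne_iff hθ.1.2 hα).2 hθα))
    exact habelian β hβ γ hγ hsum
  · rintro (rfl | ⟨α, hα, rfl, hθα⟩)
    · exact fun β hβ => absurd ⟨hβ.1.1, R.closure_le_span ℤ hβ.1.2⟩ hβ.2
    · exact fun β hβ γ hγ => R.add_notMem_roots_of_coeff_highest_eq_one hθ hα
        ((R.coeffOne_iff hθ.1.2 hα).1 hθα) hβ hγ
end
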